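/- arXiv:1608.08551 — 14 statements merged into one kernel-verified Lean document; each statement's English description precedes it below -/
import Mathlib

section
/- Let U be a finite set and let 𝒞 be a collection of subsets of U with ∅ ∈ 𝒞. Then at least one of the following holds: (a) 𝒞 = 𝒫(X) for some subset X ⊆ U; (b) there exists T ⊆ U with |T| ≥ 2 such that 𝒞 ∩ 𝒫(T) = 𝒫(T) ∖ {T}; (c) there exist an element s and a set S with s ∈ S ⊆ U, |S| ≥ 2, such that {C ∈ 𝒞 : s ∈ C} ∩ 𝒫(S) = {S}. -/
/-- Lemma (set lemma): for a finite set `U` and a collection `𝒞` of subsets of `U`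
containing `∅`, one of three alternatives holds. -/
theorem stmt_0 {α : Type*} [DecidableEq α] (U : Finset α) (𝒞 : Finset (Finset α))
    (hU : ∀ C ∈ 𝒞, C ⊆ U) (hempty : (∅ : Finset α) ∈ 𝒞) :
    (∃ X ⊆ U, 𝒞 = X.powerset) ∨
    (∃ T ⊆ U, 2 ≤ T.card ∧ 𝒞 ∩ T.powerset = T.powerset.erase T) ∨
    (∃ s : α, ∃ S ⊆ U, s ∈ S ∧ 2 ≤ S.card ∧
      (𝒞.filter fun C => s ∈ C) ∩ S.powerset = {S}) := by
  induction U using Finset.strongInduction generalizing 𝒞 with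
  | _ U ih =>
  by_cases hfull : U.powerset ⊆ 𝒞
  · left
    exact ⟨U, Finset.Subset.refl U,
      (Finset.Subset.antisymm (fun C hC => Finset.mem_powerset.mpr (hU C hC)) hfull)⟩
  · have hM : (U.powerset.filter (· ∉ 𝒞)).Nonempty := by
      rw [Finset.filter_nonempty_iff]
      by_contra h
      push_neg at h
      exact hfull fun A hA => h A hA
    obtain ⟨T, hTmem, hTmin⟩ := Finset.exists_min_image _ Finset.card hM
    simp only [Finset.mem_filter, Finset.mem_powerset] at hTmem
    obtain ⟨hTU, hTnot⟩ := hTmem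
    have hTne : T ≠ ∅ := fun h => hTnot (h ▸ hempty)
    have hmin' : ∀ A ⊆ U, A.card < T.card → A ∈ 𝒞 := by
      intro A hAU hAcard
      by_contra hA
      exact absurd (hTmin A (Finset.mem_filter.mpr ⟨Finset.mem_powerset.mpr hAU, hA⟩))
        (not_le.mpr hAcard)
    rcases lt_or_ge T.card 2 with h2 | h2
    · have hc1 : T.card = 1 := by
        have := Finset.card_pos.mpr (Finset.nonempty_iff_ne_empty.mpr hTne)
        omega
      obtain ⟨s, rfl⟩ := Finset.card_eq_one.mp hc1
      have hsU : s ∈ U := hTU (Finset.mem_singleton_self s)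
      by_cases hex : ∃ C ∈ 𝒞, s ∈ C
      · have hN : (𝒞.filter (fun C => s ∈ C)).Nonempty := by
          obtain ⟨C, hC, hsC⟩ := hex
          exact ⟨C, Finset.mem_filter.mpr ⟨hC, hsC⟩⟩
        obtain ⟨S, hSmem, hSmin⟩ := Finset.exists_min_image _ Finset.card hN
        simp only [Finset.mem_filter] at hSmem
        right; right
        refine ⟨s, S, hU S hSmem.1, hSmem.2, ?_, ?_⟩
        · by_contra hlt
          push_neg at hlt
          have h1 : 1 ≤ S.card := Finset.card_pos.mpr ⟨s, hSmem.2⟩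
          have : S.card = 1 := by omega
          obtain ⟨a, ha⟩ := Finset.card_eq_one.mp this
          have : s = a := by
            have := hSmem.2
            rw [ha, Finset.mem_singleton] at this
            exact this
          exact hTnot (by rw [this, ← ha]; exact hSmem.1)
        · ext C
          simp only [Finset.mem_inter, Finset.mem_filter, Finset.mem_powerset,
            Finset.mem_singleton]
          constructor
          · rintro ⟨⟨hC, hsC⟩, hCS⟩
            exact Finset.eq_of_subset_of_card_le hCS
              (hSmin C (Finset.mem_filter.mpr ⟨hC, hsC⟩))
          · rintro rfl
            exact ⟨⟨hSmem.1, hSmem.2⟩, Finset.Subset.refl _⟩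
      · push_neg at hex
        have hU' : ∀ C ∈ 𝒞, C ⊆ U.erase s :=
          fun C hC => Finset.subset_erase.mpr ⟨hU C hC, hex C hC⟩
        have herase : U.erase s ⊂ U := Finset.erase_ssubset hsU
        rcases ih (U.erase s) herase 𝒞 hU' hempty with ⟨X, hX, h⟩ | ⟨T', hT', h⟩ | ⟨t, S, hS, h⟩
        · exact Or.inl ⟨X, hX.trans (Finset.erase_subset _ _), h⟩
        · exact Or.inr (Or.inl ⟨T', hT'.trans (Finset.erase_subset _ _), h⟩)
        · exact Or.inr (Or.inr ⟨t, S, hS.trans (Finset.erase_subset _ _), h⟩)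
    · right; left
      refine ⟨T, hTU, h2, ?_⟩
      ext A
      simp only [Finset.mem_inter, Finset.mem_powerset, Finset.mem_erase]
      constructor
      · rintro ⟨hA, hAT⟩
        exact ⟨fun h => hTnot (h ▸ hA), hAT⟩
      · rintro ⟨hne, hAT⟩
        refine ⟨hmin' A (hAT.trans hTU) (Finset.card_lt_card ?_), hAT⟩
        exact lt_of_le_of_ne hAT hne
end

section
/- Let f ≥ 0 and N be integers with 2^f ≤ N ≤ 2^{f+1} − 1. Then C(2N+1, N+1) + C(2^{f+1}−1, N+1) is odd. Moreover, C(2N+1, N+1) is odd if and only if N = 2^{f+1} − 1 (so in that case the first summand is the odd one, and otherwise the second summand C(2^{f+1}−1, N+1) is odd). -/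
open Nat

private instance : Fact (Nat.Prime 2) := ⟨Nat.prime_two⟩

private lemma lucas_step (n k : ℕ) :
    Nat.choose n k % 2 = (Nat.choose (n % 2) (k % 2) * Nat.choose (n / 2) (k / 2)) % 2 :=
  Choose.choose_modEq_choose_mod_mul_choose_div_nat (p := 2)

private lemma odd_choose_pow_sub_one : ∀ k m : ℕ, m ≤ 2 ^ k - 1 → Odd (Nat.choose (2 ^ k - 1) m) := by
  intro k
  induction k with
  | zero => intro m hm; interval_cases m; simp
  | succ k ih =>
    intro m hm
    have hN : 2 ^ (k + 1) - 1 = 2 * (2 ^ k - 1) + 1 := by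
      have : 1 ≤ 2 ^ k := Nat.one_le_two_pow
      omega
    rw [Nat.odd_iff, lucas_step, hN]
    have h1 : (2 * (2 ^ k - 1) + 1) % 2 = 1 := by omega
    have h2 : (2 * (2 ^ k - 1) + 1) / 2 = 2 ^ k - 1 := by omega
    rw [h1, h2]
    have hm2 : m / 2 ≤ 2 ^ k - 1 := by
      have : 1 ≤ 2 ^ k := Nat.one_le_two_pow
      omega
    have ho := (Nat.odd_iff).mp (ih (m / 2) hm2)
    have hc : Nat.choose 1 (m % 2) = 1 := by
      rcases Nat.mod_two_eq_zero_or_one m with h | h <;> simp [h]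
    rw [hc, one_mul, ho]

private lemma even_central : ∀ M : ℕ, 1 ≤ M → Even (Nat.choose (2 * M) M) := by
  intro M
  induction M using Nat.strong_induction_on with
  | _ M ih =>
    intro hM
    rw [Nat.even_iff, lucas_step]
    rcases Nat.even_or_odd M with hE | hO
    · obtain ⟨m, rfl⟩ := hE
      have h1 : (2 * (m + m)) % 2 = 0 := by omega
      have h2 : (2 * (m + m)) / 2 = m + m := by omega
      have h3 : (m + m) % 2 = 0 := by omega
      have h4 : (m + m) / 2 = m := by omega
      rw [h1, h2, h3, h4]
      have hm1 : 1 ≤ m := by omega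
      have := (Nat.even_iff).mp (ih m (by omega) hm1)
      have h5 : m + m = 2 * m := by ring
      rw [h5] at *
      simp [Nat.choose_zero_right, this, Nat.mul_mod, this]
    · have h1 : (2 * M) % 2 = 0 := by omega
      have h3 : M % 2 = 1 := Nat.odd_iff.mp hO
      rw [h1, h3]
      simp

private lemma odd_central_iff : ∀ N : ℕ, Odd (Nat.choose (2 * N + 1) (N + 1)) ↔ ∃ k, N = 2 ^ k - 1 := by
  intro N
  induction N using Nat.strong_induction_on with
  | _ N ih =>
    rcases Nat.eq_zero_or_pos N with rfl | hpos
    · simp only [Nat.mul_zero, Nat.zero_add, Nat.choose_self]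
      constructor
      · intro _; exact ⟨0, by norm_num⟩
      · intro _; exact odd_one
    rcases Nat.even_or_odd N with hE | hO
    · -- N even and ≥ 1: choose is even, and N ≠ 2^k - 1
      obtain ⟨m, rfl⟩ := hE
      constructor
      · intro hodd
        exfalso
        rw [Nat.odd_iff, lucas_step] at hodd
        have h1 : (2 * (m + m) + 1) % 2 = 1 := by omega
        have h2 : (2 * (m + m) + 1) / 2 = m + m := by omega
        have h3 : (m + m + 1) % 2 = 1 := by omega
        have h4 : (m + m + 1) / 2 = m := by omega
        rw [h1, h2, h3, h4] at hodd
        have h5 : m + m = 2 * m := by ring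
        rw [h5] at hodd
        have := (Nat.even_iff).mp (even_central m (by omega))
        simp [Nat.choose_one_right, Nat.mul_mod, this] at hodd
      · rintro ⟨k, hk⟩
        exfalso
        rcases Nat.eq_zero_or_pos k with rfl | hk1
        · simp at hk; omega
        · have : 2 ^ k % 2 = 0 := by
            have : (2:ℕ) ∣ 2 ^ k := dvd_pow_self 2 (by omega)
            omega
          have h2k : 1 ≤ 2 ^ k := Nat.one_le_two_pow
          omega
    · -- N odd: N = 2M+1, reduce
      obtain ⟨M, rfl⟩ := hO
      have hred : Odd (Nat.choose (2 * (2 * M + 1) + 1) (2 * M + 1 + 1)) ↔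
          Odd (Nat.choose (2 * M + 1) (M + 1)) := by
        rw [Nat.odd_iff, Nat.odd_iff, lucas_step]
        have h1 : (2 * (2 * M + 1) + 1) % 2 = 1 := by omega
        have h2 : (2 * (2 * M + 1) + 1) / 2 = 2 * M + 1 := by omega
        have h3 : (2 * M + 1 + 1) % 2 = 0 := by omega
        have h4 : (2 * M + 1 + 1) / 2 = M + 1 := by omega
        rw [h1, h2, h3, h4]
        simp [Nat.mul_mod]
      rw [hred, ih M (by omega)]
      constructor
      · rintro ⟨k, rfl⟩
        refine ⟨k + 1, ?_⟩
        have : 1 ≤ 2 ^ k := Nat.one_le_two_pow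
        have : 2 ^ (k + 1) = 2 * 2 ^ k := by ring
        omega
      · rintro ⟨k, hk⟩
        rcases Nat.eq_zero_or_pos k with rfl | hk1
        · simp at hk
        obtain ⟨j, rfl⟩ : ∃ j, k = j + 1 := ⟨k - 1, by omega⟩
        refine ⟨j, ?_⟩
        have hke : 2 ^ (j + 1) = 2 * 2 ^ j := by ring
        have : 1 ≤ 2 ^ j := Nat.one_le_two_pow
        omega

/-- For `2^f ≤ N ≤ 2^{f+1} - 1`, the sum `C(2N+1, N+1) + C(2^{f+1}-1, N+1)` is odd;
moreover `C(2N+1, N+1)` is odd iff `N = 2^{f+1} - 1` (so in that case the first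
summand is the odd one, and otherwise the second summand is odd). -/
theorem stmt_2 (f N : ℕ) (h1 : 2 ^ f ≤ N) (h2 : N ≤ 2 ^ (f + 1) - 1) :
    Odd (Nat.choose (2 * N + 1) (N + 1) + Nat.choose (2 ^ (f + 1) - 1) (N + 1)) ∧
    (Odd (Nat.choose (2 * N + 1) (N + 1)) ↔ N = 2 ^ (f + 1) - 1) ∧
    (N ≠ 2 ^ (f + 1) - 1 → Odd (Nat.choose (2 ^ (f + 1) - 1) (N + 1))) := by
  have hf1 : 1 ≤ 2 ^ f := Nat.one_le_two_pow
  have hpow : 2 ^ (f + 1) = 2 * 2 ^ f := by ring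
  have hiff : Odd (Nat.choose (2 * N + 1) (N + 1)) ↔ N = 2 ^ (f + 1) - 1 := by
    rw [odd_central_iff]
    constructor
    · rintro ⟨k, rfl⟩
      have hk2 : 1 ≤ 2 ^ k := Nat.one_le_two_pow
      -- 2^f ≤ 2^k - 1 < 2^k ⇒ f < k; 2^k - 1 ≤ 2^(f+1) - 1 ⇒ k ≤ f+1
      have hfk : f < k := by
        by_contra h
        have : 2 ^ k ≤ 2 ^ f := Nat.pow_le_pow_right (by norm_num) (by omega)
        omega
      have hkf : k ≤ f + 1 := by
        by_contra h
        have : 2 ^ (f + 1 + 1) ≤ 2 ^ k := Nat.pow_le_pow_right (by norm_num) (by omega)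
        have : 2 ^ (f + 1 + 1) = 2 * 2 ^ (f + 1) := by ring
        omega
      have : k = f + 1 := by omega
      rw [this]
    · intro h; exact ⟨f + 1, h⟩
  refine ⟨?_, hiff, ?_⟩
  · by_cases hN : N = 2 ^ (f + 1) - 1
    · have hodd := hiff.mpr hN
      have hzero : Nat.choose (2 ^ (f + 1) - 1) (N + 1) = 0 := by
        apply Nat.choose_eq_zero_of_lt; omega
      rw [hzero, Nat.add_zero]; exact hodd
    · have heven : Even (Nat.choose (2 * N + 1) (N + 1)) := by
        rw [Nat.even_iff]
        have := hiff
        rw [Nat.odd_iff] at this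
        omega
      have hodd2 : Odd (Nat.choose (2 ^ (f + 1) - 1) (N + 1)) :=
        odd_choose_pow_sub_one (f + 1) (N + 1) (by omega)
      exact heven.add_odd hodd2
  · intro hN
    exact odd_choose_pow_sub_one (f + 1) (N + 1) (by omega)
end

section
/- Let m, t, A be positive integers with t ≤ m and A + t + 1 ≤ 2m. Then Σ_{i=1}^{A} C(A, i) · C(2m−A−t−1, m−i−t) + Σ_{i=0}^{A−1} C(A, i) · C(2m−A−t−1, m−i) ≡ C(2m−t, m) + C(2m−A−t, m−t) (mod 2), where any binomial coefficient whose lower index is negative is interpreted as 0. -/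
/-!
Completing the two sums `S₁`, `S₂` to Vandermonde convolutions gives
`S₁ + C(N, m-t) = C(n, m-t)` and `S₂ + C(N, m-A) = C(n, m)`, where `N = 2m-A-t-1` and
`n = A + N = 2m-t-1`. Symmetry turns `C(n, m-t)` into `C(n, m-1)` and `C(N, m-A)` into
`C(N, m-t-1)`, so two applications of Pascal's rule give the exact identity
`S₁ + S₂ + C(2m-A-t, m-t) = C(2m-t, m)`; modulo 2 the subtracted term may be added instead.
-/

/-- Binomial coefficient with integer lower index, interpreted as `0` when the
lower index is negative. -/
def intChoose (n : ℕ) (k : ℤ) : ℕ := if 0 ≤ k then n.choose k.toNat else 0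

open Finset

namespace intChoose

theorem of_neg {n : ℕ} {k : ℤ} (hk : k < 0) : intChoose n k = 0 := by
  simp [intChoose, hk.not_ge]

theorem natCast (n k : ℕ) : intChoose n k = n.choose k := by
  simp [intChoose]

theorem of_lt {n : ℕ} {k : ℤ} (hk : (n : ℤ) < k) : intChoose n k = 0 := by
  lift k to ℕ using by omega
  rw [natCast, Nat.choose_eq_zero_of_lt (by omega)]

theorem symm (n : ℕ) (k : ℤ) : intChoose n (n - k) = intChoose n k := by
  rcases lt_or_ge k 0 with hk | hk
  · rw [of_neg hk, of_lt (by omega)]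
  rcases lt_or_ge (n : ℤ) k with hkn | hkn
  · rw [of_neg (by omega), of_lt hkn]
  lift k to ℕ using hk
  rw [show (n : ℤ) - k = ((n - k : ℕ) : ℤ) by omega, natCast, natCast,
    Nat.choose_symm (by omega)]

theorem succ (n : ℕ) (k : ℤ) : intChoose (n + 1) k = intChoose n (k - 1) + intChoose n k := by
  rcases lt_or_ge k 0 with hk | hk
  · rw [of_neg hk, of_neg hk, of_neg (by omega)]
  lift k to ℕ using hk
  cases k with
  | zero => simp [intChoose]
  | succ k =>
    rw [show ((k + 1 : ℕ) : ℤ) - 1 = k by omega, natCast, natCast, natCast,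
      Nat.choose_succ_succ]

/-- Vandermonde's identity with the second lower index allowed to go negative. -/
theorem sum_range_choose_mul (a n : ℕ) (k : ℤ) :
    ∑ i ∈ range (a + 1), a.choose i * intChoose n (k - i) = intChoose (a + n) k := by
  rcases lt_or_ge k 0 with hk | hk
  · rw [of_neg hk]
    exact sum_eq_zero fun i _ ↦ by rw [of_neg (by omega), mul_zero]
  lift k to ℕ using hk
  set g : ℕ → ℕ := fun i ↦ a.choose i * intChoose n (k - i)
  have hg : ∀ i, min (a + 1) (k + 1) ≤ i → g i = 0 := by
    intro i hi
    rcases min_le_iff.mp hi with hai | hki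
    · simp [g, Nat.choose_eq_zero_of_lt (show a < i by omega)]
    · simp [g, of_neg (show (k : ℤ) - i < 0 by omega)]
  have hsum : ∀ M, min (a + 1) (k + 1) ≤ M →
      ∑ i ∈ range M, g i = ∑ i ∈ range (min (a + 1) (k + 1)), g i := fun M hM ↦
    (sum_subset (range_mono hM) fun i _ hi ↦ hg i (not_lt.mp (mem_range.not.mp hi))).symm
  rw [hsum _ (min_le_left _ _), ← hsum _ (min_le_right _ _), natCast, Nat.add_choose_eq,
    Nat.sum_antidiagonal_eq_sum_range_succ_mk]
  refine sum_congr rfl fun i hi ↦ ?_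
  rw [mem_range] at hi
  simp only [g, show (k : ℤ) - i = ((k - i : ℕ) : ℤ) by omega, natCast]

theorem sum_Icc_choose_mul_add (a n : ℕ) (k : ℤ) :
    ∑ i ∈ Icc 1 a, a.choose i * intChoose n (k - i) + intChoose n k = intChoose (a + n) k := by
  rw [← sum_range_choose_mul, sum_range_eq_add_Ico _ a.succ_pos, Nat.succ_eq_add_one,
    Ico_add_one_right_eq_Icc]
  simp [add_comm]

theorem sum_range_choose_mul_add (a n : ℕ) (k : ℤ) :
    ∑ i ∈ range a, a.choose i * intChoose n (k - i) + intChoose n (k - a) =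
      intChoose (a + n) k := by
  rw [← sum_range_choose_mul, sum_range_succ, Nat.choose_self, one_mul]

end intChoose

theorem sum_choose_mul_intChoose_add_choose {m t A : ℕ} (htm : t ≤ m)
    (hAt : A + t + 1 ≤ 2 * m) :
    (∑ i ∈ Icc 1 A, A.choose i * intChoose (2 * m - A - t - 1) ((m : ℤ) - i - t)) +
      (∑ i ∈ range A, A.choose i * intChoose (2 * m - A - t - 1) ((m : ℤ) - i)) +
      (2 * m - A - t).choose (m - t) = (2 * m - t).choose m := by
  set N := 2 * m - A - t - 1
  have hS₁ : ∑ i ∈ Icc 1 A, A.choose i * intChoose N (m - i - t) + intChoose N (m - t) =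
      intChoose (A + N) (m - t) := by
    simpa only [sub_right_comm] using intChoose.sum_Icc_choose_mul_add A N ((m : ℤ) - t)
  have hS₂ := intChoose.sum_range_choose_mul_add A N m
  have hn : (2 * m - t).choose m = intChoose (A + N) (m - 1) + intChoose (A + N) m := by
    rw [← intChoose.succ, show A + N + 1 = 2 * m - t by omega, intChoose.natCast]
  have hN : (2 * m - A - t).choose (m - t) = intChoose N (m - t - 1) + intChoose N (m - t) := by
    rw [← intChoose.succ, show N + 1 = 2 * m - A - t by omega, ← intChoose.natCast]
    congr 1
    omega
  rw [← intChoose.symm (A + N) ((m : ℤ) - 1),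
    show ((A + N : ℕ) : ℤ) - (m - 1) = m - t by omega] at hn
  rw [← intChoose.symm N, show (N : ℤ) - (m - t - 1) = m - A by omega] at hN
  omega

theorem Nat.modEq_two_add_of_add_eq {a b c : ℕ} (h : a + b = c) : a ≡ c + b [MOD 2] := by
  unfold Nat.ModEq
  omega

theorem stmt_3_general (m t A : ℕ)
    (htm : t ≤ m) (hAt : A + t + 1 ≤ 2 * m) :
    (∑ i ∈ Finset.Icc 1 A,
        Nat.choose A i * intChoose (2 * m - A - t - 1) ((m : ℤ) - i - t)) +
      (∑ i ∈ Finset.range A,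
        Nat.choose A i * intChoose (2 * m - A - t - 1) ((m : ℤ) - i)) ≡
    Nat.choose (2 * m - t) m + Nat.choose (2 * m - A - t) (m - t) [MOD 2] :=
  Nat.modEq_two_add_of_add_eq (sum_choose_mul_intChoose_add_choose htm hAt)

/-- Part (1) of Proposition 2.5 (longprop), as a binomial-coefficient identity mod 2:
`Σ_{i=1}^{A} C(A,i)·C(2m-A-t-1, m-i-t) + Σ_{i=0}^{A-1} C(A,i)·C(2m-A-t-1, m-i)`
is congruent to `C(2m-t, m) + C(2m-A-t, m-t)` mod 2, where binomial coefficients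
with negative lower index are interpreted as 0. -/
theorem stmt_3 (m t A : ℕ) (hm : 0 < m) (ht : 0 < t) (hA : 0 < A)
    (htm : t ≤ m) (hAt : A + t + 1 ≤ 2 * m) :
    (∑ i ∈ Finset.Icc 1 A,
        Nat.choose A i * intChoose (2 * m - A - t - 1) ((m : ℤ) - i - t)) +
      (∑ i ∈ Finset.range A,
        Nat.choose A i * intChoose (2 * m - A - t - 1) ((m : ℤ) - i)) ≡
    Nat.choose (2 * m - t) m + Nat.choose (2 * m - A - t) (m - t) [MOD 2] :=
  stmt_3_general m t A htm hAt
end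

section
/- Let e ≥ 1 and Δ be integers with 1 ≤ Δ < 2^e, and set m = 2^e + Δ. If t is an integer with 1 ≤ t ≤ 2Δ and A = 2Δ + 1 − t, then C(2m−t, m) + C(2m−A−t, m−t) is odd. -/
/-- `C(2^i - 1, j)` is odd for `j ≤ 2^i - 1`. -/
lemma aux_odd_choose_pow_sub_one : ∀ i j : ℕ, j ≤ 2 ^ i - 1 →
    Nat.choose (2 ^ i - 1) j % 2 = 1 := by
  intro i
  induction i with
  | zero =>
    intro j hj
    simp at hj
    simp [hj]
  | succ i ih =>
    intro j hj
    have h2 : (2 : ℕ) ^ (i + 1) = 2 * 2 ^ i := by ring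
    have hpos : (1 : ℕ) ≤ 2 ^ i := Nat.one_le_two_pow
    have hmod : (2 ^ (i + 1) - 1) % 2 = 1 := by omega
    have hdiv : (2 ^ (i + 1) - 1) / 2 = 2 ^ i - 1 := by omega
    have hstep := @Choose.choose_modEq_choose_mod_mul_choose_div_nat (2 ^ (i + 1) - 1) j 2 ⟨Nat.prime_two⟩
    rw [Nat.ModEq] at hstep
    rw [hstep, hmod, hdiv]
    have hj2 : j / 2 ≤ 2 ^ i - 1 := by omega
    have h1 : Nat.choose 1 (j % 2) = 1 := by
      have : j % 2 = 0 ∨ j % 2 = 1 := by omega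
      rcases this with h | h <;> simp [h]
    rw [h1, one_mul, Nat.mod_mod_of_dvd _ (dvd_refl 2) |>.symm] at *
    simpa using ih (j / 2) hj2

/-- Proposition 2.5(2a): with `m = 2^e + Δ`, `1 ≤ Δ < 2^e`, `1 ≤ t ≤ 2Δ`, and
`A = 2Δ + 1 - t`, the sum `C(2m-t, m) + C(2m-A-t, m-t)` is odd. -/
theorem stmt_4 (e Δ m t A : ℕ) (he : 1 ≤ e) (hΔ1 : 1 ≤ Δ) (hΔ2 : Δ < 2 ^ e)
    (hm : m = 2 ^ e + Δ) (ht1 : 1 ≤ t) (ht2 : t ≤ 2 * Δ)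
    (hA : A = 2 * Δ + 1 - t) :
    Odd (Nat.choose (2 * m - t) m + Nat.choose (2 * m - A - t) (m - t)) := by
  have h2 : (2 : ℕ) ^ (e + 1) = 2 * 2 ^ e := by ring
  have h4 : (2 : ℕ) ^ (e + 2) = 4 * 2 ^ e := by ring
  -- second term equals C(2^(e+1) - 1, m - t), which is odd
  have hsnd : 2 * m - A - t = 2 ^ (e + 1) - 1 := by omega
  have hmt : m - t ≤ 2 ^ (e + 1) - 1 := by omega
  have hodd : Nat.choose (2 * m - A - t) (m - t) % 2 = 1 := by
    rw [hsnd]; exact aux_odd_choose_pow_sub_one (e + 1) (m - t) hmt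
  -- first term is even, by Kummer's theorem: there is a carry at position e+1
  have hkn : m ≤ 2 * m - t := by omega
  have hnb : Nat.log 2 (2 * m - t) < e + 2 :=
    Nat.log_lt_of_lt_pow (by omega) (by omega)
  have hmult := Nat.Prime.emultiplicity_choose (p := 2) Nat.prime_two hkn hnb
  have hmem : (e + 1) ∈ Finset.filter
      (fun i => 2 ^ i ≤ m % 2 ^ i + (2 * m - t - m) % 2 ^ i)
      (Finset.Ico 1 (e + 2)) := by
    rw [Finset.mem_filter, Finset.mem_Ico]
    refine ⟨⟨by omega, by omega⟩, ?_⟩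
    have hm1 : m % 2 ^ (e + 1) = m := Nat.mod_eq_of_lt (by omega)
    have hm2 : (2 * m - t - m) % 2 ^ (e + 1) = 2 * m - t - m :=
      Nat.mod_eq_of_lt (by omega)
    rw [hm1, hm2]; omega
  have hcard : 1 ≤ (Finset.filter
      (fun i => 2 ^ i ≤ m % 2 ^ i + (2 * m - t - m) % 2 ^ i)
      (Finset.Ico 1 (e + 2))).card := Finset.card_pos.mpr ⟨e + 1, hmem⟩
  have hdvd : 2 ∣ Nat.choose (2 * m - t) m := by
    have : (1 : ℕ∞) ≤ emultiplicity 2 (Nat.choose (2 * m - t) m) := by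
      rw [hmult]; exact_mod_cast hcard
    simpa using pow_dvd_of_le_emultiplicity (k := 1) this
  have heven : Nat.choose (2 * m - t) m % 2 = 0 := Nat.eq_zero_of_dvd_of_lt
    ((Nat.dvd_mod_iff (dvd_refl 2)).mpr hdvd) (by omega)
  rw [Nat.odd_iff]
  omega
end

section
/- Let e ≥ 1 and Δ be integers with 1 ≤ Δ < 2^e, and set m = 2^e + Δ. If t is an integer with 2Δ + 1 ≤ t ≤ 2^e such that C(t−Δ−1, Δ) is even, and A = Δ, then C(2m−t, m) + C(2m−A−t, m−t) is odd. -/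
/-!
By Lucas' theorem modulo 2, `C(a + b, a)` is odd iff `a` and `b` have disjoint binary digits.
Put `u = m - t` and `w = t - 2Δ - 1`, so that `Δ + u + w = 2^e - 1`. The second summand is
`C(u + 2^e, u)`, odd because `u < 2^e`. If the first one, `C(m + u, m)`, were odd too, `Δ` and `u`
would be digit-disjoint, and in the identity
`C(2^e - 1, Δ + u) C(Δ + u, u) = C(2^e - 1, u) C(Δ + w, Δ)` every other factor is odd
(all binomials of `2^e - 1` are), forcing `C(t - Δ - 1, Δ) = C(Δ + w, Δ)` to be odd.
-/

namespace Nat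

theorem odd_choose_add_iff_and_eq_zero (a b : ℕ) : Odd ((a + b).choose a) ↔ a &&& b = 0 := by
  induction a using Nat.strong_induction_on generalizing b with
  | _ a ih =>
    rcases Nat.eq_zero_or_pos a with rfl | ha
    · simp
    have lucas : (a + b).choose a ≡ ((a + b) % 2).choose (a % 2) * ((a + b) / 2).choose (a / 2)
        [MOD 2] :=
      haveI : Fact (Nat.Prime 2) := ⟨Nat.prime_two⟩
      Choose.choose_modEq_choose_mod_mul_choose_div_nat
    have and_eq_zero_iff : a &&& b = 0 ↔ ¬(a % 2 = 1 ∧ b % 2 = 1) ∧ a / 2 &&& b / 2 = 0 := by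
      rw [← and_mod_two_eq_one, ← and_div_two]
      omega
    rw [Nat.odd_iff, lucas, and_eq_zero_iff]
    by_cases hab : a % 2 = 1 ∧ b % 2 = 1
    · have : (a + b) % 2 = 0 := by omega
      simp [hab, this]
    · have hdiv : (a + b) / 2 = a / 2 + b / 2 := by omega
      have hone : ((a + b) % 2).choose (a % 2) = 1 := by
        rcases Nat.mod_two_eq_zero_or_one a with h | h <;> simp_all [Nat.add_mod]
      rw [hone, one_mul, hdiv, ← Nat.odd_iff, ih (a / 2) (by omega)]
      simp [hab]

theorem and_eq_zero_of_add_eq_two_pow_sub_one {a b e : ℕ} (h : a + b = 2 ^ e - 1) :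
    a &&& b = 0 := by
  have hpos := Nat.two_pow_pos e
  have hb : b = 2 ^ e - (a + 1) := by omega
  apply Nat.eq_of_testBit_eq
  intro i
  rw [hb, testBit_and, testBit_two_pow_sub_succ (by omega)]
  cases a.testBit i <;> simp

theorem odd_choose_two_pow_sub_one {e k : ℕ} (hk : k < 2 ^ e) : Odd ((2 ^ e - 1).choose k) := by
  obtain ⟨j, hj⟩ : ∃ j, k + j = 2 ^ e - 1 := ⟨2 ^ e - 1 - k, by omega⟩
  rw [← hj, odd_choose_add_iff_and_eq_zero]
  exact and_eq_zero_of_add_eq_two_pow_sub_one hj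

theorem odd_choose_add_two_pow {e u : ℕ} (hu : u < 2 ^ e) : Odd ((u + 2 ^ e).choose u) := by
  rw [odd_choose_add_iff_and_eq_zero, and_two_pow, testBit_lt_two_pow hu]
  simp

theorem odd_choose_of_odd_choose_two_pow_add {e a u w : ℕ} (hsum : a + u + w + 1 = 2 ^ e)
    (h : Odd ((2 ^ e + a + u).choose (2 ^ e + a))) : Odd ((a + w).choose a) := by
  have hau : a &&& u = 0 := by
    rw [odd_choose_add_iff_and_eq_zero] at h
    have := congrArg (· % 2 ^ e) h
    simp only [and_mod_two_pow, zero_mod] at this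
    rwa [add_mod_left, mod_eq_of_lt (by omega), mod_eq_of_lt (by omega)] at this
  have hprod : (2 ^ e - 1).choose (a + u) * (a + u).choose u
      = (2 ^ e - 1).choose u * (a + w).choose a := by
    rw [choose_mul (by omega)]
    congr 2 <;> omega
  have hodd : Odd ((2 ^ e - 1).choose (a + u) * (a + u).choose u) :=
    (odd_choose_two_pow_sub_one (by omega)).mul
      (by rw [add_comm, odd_choose_add_iff_and_eq_zero, Nat.and_comm, hau])
  rw [hprod] at hodd
  exact (odd_mul.mp hodd).2

end Nat

theorem stmt_5_general (e Δ m t A : ℕ)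
    (hm : m = 2 ^ e + Δ) (ht1 : 2 * Δ + 1 ≤ t) (ht2 : t ≤ 2 ^ e)
    (heven : Even (Nat.choose (t - Δ - 1) Δ)) (hA : A = Δ) :
    Odd (Nat.choose (2 * m - t) m + Nat.choose (2 * m - A - t) (m - t)) := by
  set u := 2 ^ e + Δ - t
  set w := t - 2 * Δ - 1
  have hsum : Δ + u + w + 1 = 2 ^ e := by omega
  have h₁ : 2 * m - t = 2 ^ e + Δ + u := by omega
  have h₂ : 2 * m - A - t = u + 2 ^ e := by omega
  have h₃ : m - t = u := by omega
  have h₄ : t - Δ - 1 = Δ + w := by omega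
  rw [h₄, ← Nat.not_odd_iff_even] at heven
  rw [h₁, h₂, h₃, hm]
  have hfirst : Even ((2 ^ e + Δ + u).choose (2 ^ e + Δ)) :=
    Nat.not_odd_iff_even.mp fun h => heven (Nat.odd_choose_of_odd_choose_two_pow_add hsum h)
  exact hfirst.add_odd (Nat.odd_choose_add_two_pow (by omega))

/-- Proposition 2.5(2b): with `m = 2^e + Δ`, `1 ≤ Δ < 2^e`, `2Δ+1 ≤ t ≤ 2^e`,
`C(t-Δ-1, Δ)` even, and `A = Δ`, the sum `C(2m-t, m) + C(2m-A-t, m-t)` is odd. -/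
theorem stmt_5 (e Δ m t A : ℕ) (he : 1 ≤ e) (hΔ1 : 1 ≤ Δ) (hΔ2 : Δ < 2 ^ e)
    (hm : m = 2 ^ e + Δ) (ht1 : 2 * Δ + 1 ≤ t) (ht2 : t ≤ 2 ^ e)
    (heven : Even (Nat.choose (t - Δ - 1) Δ)) (hA : A = Δ) :
    Odd (Nat.choose (2 * m - t) m + Nat.choose (2 * m - A - t) (m - t)) :=
  stmt_5_general e Δ m t A hm ht1 ht2 heven hA
end

section
/- Let e ≥ 1 and Δ be integers with 1 ≤ Δ < 2^e, and set m = 2^e + Δ. If t is an integer with 2^e < t ≤ m − 1 such that C(m−t+Δ, Δ) is even, and A = Δ, then C(2m−t, m) + C(2m−A−t, m−t) is odd. -/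
private instance inst_s7 : Fact (Nat.Prime 2) := ⟨Nat.prime_two⟩

private lemma lucas2 (n k : ℕ) :
    Nat.choose n k ≡ Nat.choose (n % 2) (k % 2) * Nat.choose (n / 2) (k / 2) [MOD 2] :=
  Choose.choose_modEq_choose_mod_mul_choose_div_nat (p := 2)

private lemma L2 : ∀ e a b : ℕ, a < 2 ^ e → b < 2 ^ e →
    Nat.choose (2 ^ e + a) b ≡ Nat.choose a b [MOD 2] := by
  intro e
  induction e with
  | zero => intro a b ha hb; interval_cases a <;> interval_cases b <;> rfl
  | succ e ih =>
    intro a b ha hb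
    have h1 : (2 ^ (e+1) + a) % 2 = a % 2 := by omega
    have h2 : (2 ^ (e+1) + a) / 2 = 2 ^ e + a / 2 := by
      rw [pow_succ]; omega
    calc Nat.choose (2 ^ (e+1) + a) b
        ≡ Nat.choose (a % 2) (b % 2) * Nat.choose (2 ^ e + a / 2) (b / 2) [MOD 2] := by
          have := lucas2 (2 ^ (e+1) + a) b; rwa [h1, h2] at this
      _ ≡ Nat.choose (a % 2) (b % 2) * Nat.choose (a / 2) (b / 2) [MOD 2] :=
          Nat.ModEq.mul_left _ (ih _ _ (by rw [pow_succ] at ha; omega)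
            (by rw [pow_succ] at hb; omega))
      _ ≡ Nat.choose a b [MOD 2] := (lucas2 a b).symm

private lemma L1 : ∀ e a b : ℕ, a < 2 ^ e → b < 2 ^ e →
    Nat.choose (2 ^ e + a) (2 ^ e + b) ≡ Nat.choose a b [MOD 2] := by
  intro e
  induction e with
  | zero => intro a b ha hb; interval_cases a <;> interval_cases b <;> rfl
  | succ e ih =>
    intro a b ha hb
    have h1 : (2 ^ (e+1) + a) % 2 = a % 2 := by omega
    have h2 : (2 ^ (e+1) + a) / 2 = 2 ^ e + a / 2 := by rw [pow_succ]; omega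
    have h3 : (2 ^ (e+1) + b) % 2 = b % 2 := by omega
    have h4 : (2 ^ (e+1) + b) / 2 = 2 ^ e + b / 2 := by rw [pow_succ]; omega
    calc Nat.choose (2 ^ (e+1) + a) (2 ^ (e+1) + b)
        ≡ Nat.choose (a % 2) (b % 2) *
            Nat.choose (2 ^ e + a / 2) (2 ^ e + b / 2) [MOD 2] := by
          have := lucas2 (2 ^ (e+1) + a) (2 ^ (e+1) + b); rwa [h1, h2, h3, h4] at this
      _ ≡ Nat.choose (a % 2) (b % 2) * Nat.choose (a / 2) (b / 2) [MOD 2] :=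
          Nat.ModEq.mul_left _ (ih _ _ (by rw [pow_succ] at ha; omega)
            (by rw [pow_succ] at hb; omega))
      _ ≡ Nat.choose a b [MOD 2] := (lucas2 a b).symm

/-- Proposition 2.5(2d): with `m = 2^e + Δ`, `1 ≤ Δ < 2^e`, `2^e < t ≤ m - 1`,
`C(m-t+Δ, Δ)` even, and `A = Δ`, the sum `C(2m-t, m) + C(2m-A-t, m-t)` is odd. -/
theorem stmt_7 (e Δ m t A : ℕ) (he : 1 ≤ e) (hΔ1 : 1 ≤ Δ) (hΔ2 : Δ < 2 ^ e)
    (hm : m = 2 ^ e + Δ) (ht1 : 2 ^ e < t) (ht2 : t ≤ m - 1)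
    (heven : Even (Nat.choose (m - t + Δ) Δ)) (hA : A = Δ) :
    Odd (Nat.choose (2 * m - t) m + Nat.choose (2 * m - A - t) (m - t)) := by
  subst hm
  rw [hA]
  set s := t - 2 ^ e with hs
  have hs1 : 1 ≤ s := by omega
  have hs2 : s ≤ Δ - 1 := by omega
  -- second term
  have e2 : 2 * (2 ^ e + Δ) - Δ - t = 2 ^ e + (Δ - s) := by omega
  have e3 : (2 ^ e + Δ) - t = Δ - s := by omega
  have hodd2 : Nat.choose (2 * (2 ^ e + Δ) - Δ - t) ((2 ^ e + Δ) - t) % 2 = 1 := by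
    rw [e2, e3]
    have := L2 e (Δ - s) (Δ - s) (by omega) (by omega)
    have h1 : Nat.choose (Δ - s) (Δ - s) = 1 := Nat.choose_self _
    unfold Nat.ModEq at this
    omega
  -- first term
  have e1 : 2 * (2 ^ e + Δ) - t = 2 ^ e + (2 * Δ - s) := by omega
  have e4 : (2 ^ e + Δ) - t + Δ = 2 * Δ - s := by omega
  rw [e4] at heven
  have heven' : Nat.choose (2 * Δ - s) Δ % 2 = 0 := (Nat.even_iff).mp heven
  have heven1 : Nat.choose (2 * (2 ^ e + Δ) - t) (2 ^ e + Δ) % 2 = 0 := by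
    rw [e1]
    by_cases hX : 2 * Δ - s < 2 ^ e
    · have := L1 e (2 * Δ - s) Δ hX hΔ2
      unfold Nat.ModEq at this
      omega
    · -- 2Δ - s ≥ 2^e : rewrite as 2^(e+1) + r
      have hr : 2 ^ e + (2 * Δ - s) = 2 ^ (e+1) + (2 * Δ - s - 2 ^ e) := by
        rw [pow_succ]; omega
      rw [hr]
      have := L2 (e+1) (2 * Δ - s - 2 ^ e) (2 ^ e + Δ)
        (by rw [pow_succ]; omega) (by rw [pow_succ]; omega)
      have h0 : Nat.choose (2 * Δ - s - 2 ^ e) (2 ^ e + Δ) = 0 :=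
        Nat.choose_eq_zero_of_lt (by omega)
      unfold Nat.ModEq at this
      omega
  rw [Nat.odd_iff]
  omega
end

section
/- Let e ≥ 1 and Δ be integers with 1 ≤ Δ < 2^e, and set m = 2^e + Δ. If t is an integer with 2^e < t ≤ m − 1 such that C(m−t+Δ, Δ) is odd, and A = Δ − 2^{ν(m−t)} (note that 2^{ν(m−t)} ≤ m − t ≤ Δ − 1, so A ≥ 1), then C(2m−t, m) + C(2m−A−t, m−t) is odd. -/
/-!
By Kummer's theorem, `C(n + k, k)` is odd exactly when adding `n` and `k` in binary produces no
carry. With `s = m - t`, oddness of `C(s + Δ, Δ)` says that `s + Δ` is carry-free, hence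
`s + Δ < 2 ^ e`, and then `s + m = s + (2 ^ e + Δ)` is carry-free too: `C(2m - t, m)` is odd.
On the other hand `2m - A - t = 2 ^ e + 2 ^ ν(s) + s`, and both `2 ^ e + 2 ^ ν(s)` and `s` have
lowest set bit `ν(s) < e`, so adding them carries there: `C(2m - A - t, s)` is even.
-/

namespace Nat

theorem odd_choose_add_iff_forall_mod_two_pow_add_lt (n k : ℕ) :
    Odd ((n + k).choose k) ↔ ∀ i, k % 2 ^ i + n % 2 ^ i < 2 ^ i := by
  have hodd : Odd ((n + k).choose k) ↔ padicValNat 2 ((n + k).choose k) = 0 := by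
    simp [padicValNat.eq_zero_iff, (Nat.choose_pos (Nat.le_add_left k n)).ne',
      Nat.odd_iff, Nat.dvd_iff_mod_eq_zero]
  set b := Nat.log 2 (n + k) + 1
  rw [hodd, padicValNat_choose' (Nat.lt_succ_self _), Finset.card_eq_zero,
    Finset.filter_eq_empty_iff]
  simp only [Finset.mem_Ico, not_le]
  refine ⟨fun h i => ?_, fun h i _ => h i⟩
  rcases lt_or_ge i b with hib | hbi
  · rcases Nat.eq_zero_or_pos i with rfl | hi
    · simp [Nat.mod_one]
    · exact h ⟨hi, hib⟩
  · calc k % 2 ^ i + n % 2 ^ i ≤ n + k := by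
          have := Nat.mod_le k (2 ^ i); have := Nat.mod_le n (2 ^ i); omega
      _ < 2 ^ b := Nat.lt_pow_succ_log_self one_lt_two _
      _ ≤ 2 ^ i := Nat.pow_le_pow_right two_pos hbi

theorem odd_choose_add_two_pow_add {n k e : ℕ} (hlt : n + k < 2 ^ e)
    (hodd : Odd ((n + k).choose k)) : Odd ((n + (2 ^ e + k)).choose (2 ^ e + k)) := by
  rw [odd_choose_add_iff_forall_mod_two_pow_add_lt] at hodd ⊢
  intro i
  rcases le_or_gt i e with hie | hei
  · obtain ⟨c, hc⟩ := Nat.pow_dvd_pow 2 hie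
    rw [hc, Nat.mul_add_mod]
    exact hodd i
  · calc (2 ^ e + k) % 2 ^ i + n % 2 ^ i ≤ 2 ^ e + (n + k) := by
          have := Nat.mod_le (2 ^ e + k) (2 ^ i); have := Nat.mod_le n (2 ^ i); omega
      _ < 2 ^ (e + 1) := by rw [pow_succ]; omega
      _ ≤ 2 ^ i := Nat.pow_le_pow_right two_pos hei

theorem even_choose_add_of_mod_two_pow_succ_eq {n k v : ℕ} (hn : n % 2 ^ (v + 1) = 2 ^ v)
    (hk : k % 2 ^ (v + 1) = 2 ^ v) : Even ((n + k).choose k) := by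
  rw [← Nat.not_odd_iff_even, odd_choose_add_iff_forall_mod_two_pow_add_lt]
  intro h
  have := h (v + 1)
  rw [hn, hk, pow_succ] at this
  omega

theorem mod_two_pow_succ_eq_of_dvd_of_not_dvd {s v : ℕ} (hdvd : 2 ^ v ∣ s)
    (hndvd : ¬ 2 ^ (v + 1) ∣ s) : s % 2 ^ (v + 1) = 2 ^ v := by
  obtain ⟨u, rfl⟩ := hdvd
  rw [pow_succ, Nat.mul_dvd_mul_iff_left (by positivity), Nat.dvd_iff_mod_eq_zero] at hndvd
  rw [pow_succ, Nat.mul_mod_mul_left, Nat.mod_two_ne_zero.mp hndvd, mul_one]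

end Nat

theorem stmt_8_general (e Δ m t A : ℕ) (hΔ2 : Δ < 2 ^ e)
    (hm : m = 2 ^ e + Δ) (ht1 : 2 ^ e < t) (ht2 : t ≤ m - 1)
    (hodd : Odd (Nat.choose (m - t + Δ) Δ)) (hA : A = Δ - 2 ^ padicValNat 2 (m - t)) :
    Odd (Nat.choose (2 * m - t) m + Nat.choose (2 * m - A - t) (m - t)) := by
  set s := m - t
  set v := padicValNat 2 s
  have hs0 : s ≠ 0 := by omega
  have hsΔ : s < Δ := by omega
  have hlt : s + Δ < 2 ^ e := by
    have := (Nat.odd_choose_add_iff_forall_mod_two_pow_add_lt s Δ).mp hodd e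
    rwa [Nat.mod_eq_of_lt hΔ2, Nat.mod_eq_of_lt (hsΔ.trans hΔ2), add_comm] at this
  have hvs : 2 ^ v ≤ s := Nat.le_of_dvd (Nat.pos_of_ne_zero hs0) pow_padicValNat_dvd
  have hve : v < e := (Nat.pow_lt_pow_iff_right one_lt_two).mp (by omega)
  have hsv : s % 2 ^ (v + 1) = 2 ^ v :=
    Nat.mod_two_pow_succ_eq_of_dvd_of_not_dvd pow_padicValNat_dvd
      (pow_succ_padicValNat_not_dvd hs0)
  have hev : (2 ^ e + 2 ^ v) % 2 ^ (v + 1) = 2 ^ v := by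
    obtain ⟨c, hc⟩ := Nat.pow_dvd_pow 2 hve
    rw [hc, Nat.mul_add_mod, Nat.mod_eq_of_lt (Nat.pow_lt_pow_succ one_lt_two)]
  have hfirst : 2 * m - t = s + (2 ^ e + Δ) := by omega
  have hsecond : 2 * m - A - t = 2 ^ e + 2 ^ v + s := by omega
  rw [hfirst, hsecond, hm]
  exact (Nat.odd_choose_add_two_pow_add hlt hodd).add_even
    (Nat.even_choose_add_of_mod_two_pow_succ_eq hev hsv)

/-- Proposition 2.5(2e): with `m = 2^e + Δ`, `1 ≤ Δ < 2^e`, `2^e < t ≤ m - 1`,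
`C(m-t+Δ, Δ)` odd, and `A = Δ - 2^{ν(m-t)}` (where `ν` is the 2-adic valuation),
the sum `C(2m-t, m) + C(2m-A-t, m-t)` is odd. -/
theorem stmt_8 (e Δ m t A : ℕ) (he : 1 ≤ e) (hΔ1 : 1 ≤ Δ) (hΔ2 : Δ < 2 ^ e)
    (hm : m = 2 ^ e + Δ) (ht1 : 2 ^ e < t) (ht2 : t ≤ m - 1)
    (hodd : Odd (Nat.choose (m - t + Δ) Δ)) (hA : A = Δ - 2 ^ padicValNat 2 (m - t)) :
    Odd (Nat.choose (2 * m - t) m + Nat.choose (2 * m - A - t) (m - t)) :=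
  stmt_8_general e Δ m t A hΔ2 hm ht1 ht2 hodd hA
end

section
/- Let k ≥ 1, and let a = (a_1,…,a_k) and a′ = (a′_1,…,a′_k) be k-tuples of positive integers with a_i ≡ a′_i (mod 2^{⌊log₂(2i)⌋}) for every 1 ≤ i ≤ k. Then for every k-tuple θ of nonnegative integers, Φ(a, θ) ≡ Φ(a′, θ) (mod 2). -/
/-- `Phi k a I` is the sum `Σ_B ∏_{i=1}^k C(a_i + b_i - 2, b_i)` over all `k`-tuples
`B = (b_1,…,b_k)` of nonnegative integers such that `B + I ∈ 𝒮_k` (i.e. the sum of the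
first `j` entries of `B + I` is at most `j` for each `1 ≤ j ≤ k`) and
`(b_1+ε_1) + ⋯ + (b_k+ε_k) = k`.  Sequences are 1-indexed: the `i`-th entry of `a` is
`a i` for `1 ≤ i ≤ k`.  The top entry `a_i + b_i - 2` uses truncated subtraction. -/
def Phi (k : ℕ) (a I : ℕ → ℕ) : ℕ :=
  ∑ B ∈ (Fintype.piFinset fun _ : Fin k => Finset.range (k + 1)) |>.filter
      (fun B =>
        (∀ j : Fin k,
          (∑ i ∈ Finset.univ.filter (fun i : Fin k => i ≤ j), (B i + I (i.1 + 1)))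
            ≤ j.1 + 1) ∧
        (∑ i : Fin k, (B i + I (i.1 + 1))) = k),
    ∏ i : Fin k, Nat.choose (a (i.1 + 1) + B i - 2) (B i)

/-!
Every summand of `Φ(a, θ)` is a product of factors `C(a_i + b_i - 2, b_i)` with
`b_i ≤ i < 2^{lg(2i)}`. By Lucas's theorem, the residue mod `p` of `C(n, b)` with `b < p^L`
depends only on `n mod p^L`; and for `b ≥ 1` the top entry is `(a_i - 1) + (b_i - 1)`
without truncation, so it is determined mod `2^{lg(2i)}` by `a_i`.
-/

namespace Nat

theorem choose_modEq_choose_of_modEq_pow {p L n n' k : ℕ} [Fact p.Prime]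
    (hk : k < p ^ L) (hn : n ≡ n' [MOD p ^ L]) : n.choose k ≡ n'.choose k [MOD p] := by
  induction L generalizing n n' k with
  | zero =>
    obtain rfl : k = 0 := by simpa using hk
    simp [Nat.ModEq.refl]
  | succ L ih =>
    have hp : 0 < p := (Fact.out : p.Prime).pos
    have hmod : n % p = n' % p := hn.of_dvd (dvd_pow_self p L.succ_ne_zero)
    have hdiv : n / p ≡ n' / p [MOD p ^ L] := by
      unfold Nat.ModEq at hn ⊢
      rw [← Nat.mod_mul_right_div_self, ← Nat.mod_mul_right_div_self, ← pow_succ', hn]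
    have hk' : k / p < p ^ L := (Nat.div_lt_iff_lt_mul hp).2 (pow_succ p L ▸ hk)
    calc n.choose k ≡ (n % p).choose (k % p) * (n / p).choose (k / p) [MOD p] :=
          Choose.choose_modEq_choose_mod_mul_choose_div_nat
      _ ≡ (n' % p).choose (k % p) * (n' / p).choose (k / p) [MOD p] :=
          hmod ▸ (ih hk' hdiv).mul_left _
      _ ≡ n'.choose k [MOD p] := Choose.choose_modEq_choose_mod_mul_choose_div_nat.symm

theorem choose_add_sub_two_modEq {p L a a' b : ℕ} [Fact p.Prime] (ha : 0 < a) (ha' : 0 < a')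
    (hcong : a ≡ a' [MOD p ^ L]) (hb : b < p ^ L) :
    (a + b - 2).choose b ≡ (a' + b - 2).choose b [MOD p] := by
  obtain _ | c := b
  · simp [Nat.ModEq.refl]
  have hsub : a - 1 ≡ a' - 1 [MOD p ^ L] :=
    Nat.ModEq.add_right_cancel' 1 (by rwa [Nat.sub_add_cancel ha, Nat.sub_add_cancel ha'])
  have htop : ∀ x, 0 < x → x + (c + 1) - 2 = (x - 1) + c := fun x hx => by omega
  rw [htop a ha, htop a' ha']
  exact choose_modEq_choose_of_modEq_pow hb (hsub.add_right c)

theorem lt_two_pow_log_two_two_mul (n : ℕ) : n < 2 ^ Nat.log 2 (2 * n) := by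
  rcases Nat.eq_zero_or_pos n with rfl | hn
  · simp
  rw [mul_comm, Nat.log_mul_base one_lt_two hn.ne']
  exact Nat.lt_pow_succ_log_self one_lt_two n

end Nat

theorem stmt_11_general (k : ℕ) (a a' : ℕ → ℕ)
    (ha : ∀ i ∈ Finset.Icc 1 k, 0 < a i) (ha' : ∀ i ∈ Finset.Icc 1 k, 0 < a' i)
    (hcong : ∀ i ∈ Finset.Icc 1 k, a i ≡ a' i [MOD 2 ^ Nat.log 2 (2 * i)])
    (θ : ℕ → ℕ) :
    Phi k a θ ≡ Phi k a' θ [MOD 2] := by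
  refine Nat.ModEq.sum fun B hB => Nat.ModEq.prod fun i _ => ?_
  have hmem : i.1 + 1 ∈ Finset.Icc 1 k := Finset.mem_Icc.2 ⟨by omega, i.isLt⟩
  have hBi : B i ≤ i.1 + 1 :=
    calc B i ≤ ∑ j ∈ Finset.univ.filter (· ≤ i), (B j + θ (j.1 + 1)) :=
          (Nat.le_add_right _ _).trans <| Finset.single_le_sum (f := fun j => B j + θ (j.1 + 1))
            (fun _ _ => Nat.zero_le _) (by simp)
      _ ≤ i.1 + 1 := (Finset.mem_filter.1 hB).2.1 i
  exact Nat.choose_add_sub_two_modEq (ha _ hmem) (ha' _ hmem) (hcong _ hmem)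
    (hBi.trans_lt (Nat.lt_two_pow_log_two_two_mul _))

/-- Corollary 4.3: `Φ(a, θ)` mod 2 depends only on the reductions of the `a_i`
mod `2^{⌊log₂(2i)⌋}`. -/
theorem stmt_11 (k : ℕ) (hk : 1 ≤ k) (a a' : ℕ → ℕ)
    (ha : ∀ i ∈ Finset.Icc 1 k, 0 < a i) (ha' : ∀ i ∈ Finset.Icc 1 k, 0 < a' i)
    (hcong : ∀ i ∈ Finset.Icc 1 k, a i ≡ a' i [MOD 2 ^ Nat.log 2 (2 * i)])
    (θ : ℕ → ℕ) :
    Phi k a θ ≡ Phi k a' θ [MOD 2] :=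
  stmt_11_general k a a' ha ha' hcong θ
end

section
/- Let k ≥ 1, let Z ⊆ {1,…,k} with |Z| = r ≥ 1, and let a = (a_1,…,a_k) be a k-tuple of positive integers such that a_i ≡ 1 (mod 2^{⌊log₂(2i)⌋}) for every i ∈ Z and a_i ≡ 0 (mod 2^{⌊log₂(2i)⌋}) for every i ∉ Z. Then: (i) Φ(a, I) is even for every I ∈ {0,1}^k with ε_1 + ⋯ + ε_k < r; and (ii) Φ(a, χ_Z) is odd, where χ_Z ∈ {0,1}^k is the indicator vector of Z (entry 1 in positions belonging to Z and 0 elsewhere). -/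
open Finset

/-- By Lucas's theorem: some base-`p` digit of `b` below position `m` exceeds that of `n`. -/
theorem Nat.Prime.dvd_choose_of_mod_pow_lt {p : ℕ} (hp : p.Prime) :
    ∀ {m n b : ℕ}, n % p ^ m < b % p ^ m → p ∣ n.choose b
  | 0, n, b, h => by simp only [pow_zero, Nat.mod_one, lt_self_iff_false] at h
  | m + 1, n, b, h => by
    have := Fact.mk hp
    rw [(Choose.choose_modEq_choose_mod_mul_choose_div_nat (p := p)).dvd_iff dvd_rfl]
    rw [pow_succ', Nat.mod_mul, Nat.mod_mul] at h
    by_cases hlow : n % p < b % p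
    · simp [Nat.choose_eq_zero_of_lt hlow]
    · have hhigh : n / p % p ^ m < b / p % p ^ m :=
        Nat.lt_of_mul_lt_mul_left (a := p) (by omega)
      exact dvd_mul_of_dvd_right (hp.dvd_choose_of_mod_pow_lt hhigh) _

/-- Modulo `2 ^ m`, the top entry `a + b - 2` reduces to `c + b - 2 < b`. -/
theorem even_choose_add_sub_two {a b c m : ℕ} (hb : b < 2 ^ m) (hc : c ≤ 1) (hcb : 2 ≤ c + b)
    (ha : a ≡ c [MOD 2 ^ m]) : Even ((a + b - 2).choose b) := by
  rw [even_iff_two_dvd]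
  apply Nat.prime_two.dvd_choose_of_mod_pow_lt (m := m)
  have hac : a % 2 ^ m = c := Eq.trans ha (Nat.mod_eq_of_lt (by omega))
  have hsplit : a + b - 2 = 2 ^ m * (a / 2 ^ m) + (c + b - 2) := by
    have := Nat.div_add_mod a (2 ^ m)
    omega
  rw [hsplit, Nat.mul_add_mod, Nat.mod_eq_of_lt (by omega), Nat.mod_eq_of_lt hb]
  omega

theorem lt_two_pow_log_two_mul (i : ℕ) : i < 2 ^ Nat.log 2 (2 * i) := by
  have := Nat.lt_pow_succ_log_self Nat.one_lt_two (2 * i)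
  rw [pow_succ] at this
  omega

theorem sum_fin_eq_sum_Icc {M : Type*} [AddCommMonoid M] (k : ℕ) (f : ℕ → M) :
    ∑ i : Fin k, f (i.1 + 1) = ∑ i ∈ Icc 1 k, f i := by
  rw [Fin.sum_univ_eq_sum_range (fun i => f (i + 1)), range_eq_Ico, sum_Ico_add',
    Ico_add_one_right_eq_Icc, zero_add]

theorem add_one_mem_Icc {k : ℕ} (i : Fin k) : i.1 + 1 ∈ Icc 1 k := by
  simp only [mem_Icc]
  omega

section Phi

variable {k : ℕ}

def phiIndex (k : ℕ) (I : ℕ → ℕ) : Finset (Fin k → ℕ) :=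
  (Fintype.piFinset fun _ : Fin k => Finset.range (k + 1)) |>.filter
      (fun B =>
        (∀ j : Fin k,
          (∑ i ∈ Finset.univ.filter (fun i : Fin k => i ≤ j), (B i + I (i.1 + 1)))
            ≤ j.1 + 1) ∧
        (∑ i : Fin k, (B i + I (i.1 + 1))) = k)

def phiTerm (a : ℕ → ℕ) (B : Fin k → ℕ) : ℕ :=
  ∏ i : Fin k, Nat.choose (a (i.1 + 1) + B i - 2) (B i)

theorem Phi_eq_sum_phiTerm (a I : ℕ → ℕ) :
    Phi k a I = ∑ B ∈ phiIndex k I, phiTerm a B :=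
  rfl

theorem le_of_mem_phiIndex {I : ℕ → ℕ} {B : Fin k → ℕ} (hB : B ∈ phiIndex k I) (i : Fin k) :
    B i ≤ i.1 + 1 := by
  have hprefix := (mem_filter.1 hB).2.1 i
  have hi : B i + I (i.1 + 1) ≤ ∑ j ∈ univ.filter (· ≤ i), (B j + I (j.1 + 1)) :=
    single_le_sum (f := fun j : Fin k => B j + I (j.1 + 1)) (fun _ _ => Nat.zero_le _)
      (by simp)
  omega

theorem sum_add_eq_of_mem_phiIndex {I : ℕ → ℕ} {B : Fin k → ℕ} (hB : B ∈ phiIndex k I) :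
    ∑ i : Fin k, B i + ∑ i : Fin k, I (i.1 + 1) = k := by
  rw [← sum_add_distrib]
  exact (mem_filter.1 hB).2.2

variable {a c : ℕ → ℕ}

theorem even_phiTerm_of_one_lt (hc : ∀ i ∈ Icc 1 k, c i ≤ 1)
    (ha : ∀ i ∈ Icc 1 k, a i ≡ c i [MOD 2 ^ Nat.log 2 (2 * i)])
    {I : ℕ → ℕ} {B : Fin k → ℕ} (hB : B ∈ phiIndex k I) (i : Fin k)
    (hi : 1 < B i + c (i.1 + 1)) : Even (phiTerm a B) := by
  have hfactor : Even ((a (i.1 + 1) + B i - 2).choose (B i)) :=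
    even_choose_add_sub_two
      ((le_of_mem_phiIndex hB i).trans_lt (lt_two_pow_log_two_mul _))
      (hc _ (add_one_mem_Icc i)) (by omega) (ha _ (add_one_mem_Icc i))
  rw [even_iff_two_dvd] at hfactor ⊢
  exact hfactor.trans (dvd_prod_of_mem _ (mem_univ i))

theorem even_Phi_of_sum_lt (hc : ∀ i ∈ Icc 1 k, c i ≤ 1)
    (ha : ∀ i ∈ Icc 1 k, a i ≡ c i [MOD 2 ^ Nat.log 2 (2 * i)]) {I : ℕ → ℕ}
    (hI : ∑ i ∈ Icc 1 k, I i < ∑ i ∈ Icc 1 k, c i) : Even (Phi k a I) := by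
  rw [Phi_eq_sum_phiTerm]
  refine even_sum _ fun B hB => ?_
  by_contra hodd
  have hle : ∀ i : Fin k, B i + c (i.1 + 1) ≤ 1 := fun i =>
    not_lt.1 fun hi => hodd (even_phiTerm_of_one_lt hc ha hB i hi)
  have hsum : ∑ i : Fin k, B i + ∑ i : Fin k, c (i.1 + 1) ≤ k := by
    simpa [← sum_add_distrib] using sum_le_sum fun i (_ : i ∈ univ) => hle i
  have := sum_add_eq_of_mem_phiIndex hB
  rw [← sum_fin_eq_sum_Icc k I, ← sum_fin_eq_sum_Icc k c] at hI
  omega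

theorem complement_mem_phiIndex (hc : ∀ i ∈ Icc 1 k, c i ≤ 1) :
    (fun i : Fin k => 1 - c (i.1 + 1)) ∈ phiIndex k c := by
  have hone : ∀ i : Fin k, 1 - c (i.1 + 1) + c (i.1 + 1) = 1 := fun i => by
    have := hc _ (add_one_mem_Icc i)
    omega
  simp only [phiIndex, mem_filter, Fintype.mem_piFinset, mem_range, hone, sum_const,
    smul_eq_mul, mul_one, card_univ, Fintype.card_fin, and_true]
  refine ⟨fun i => by have := i.isLt; omega, fun j => ?_⟩
  rw [show univ.filter (· ≤ j) = Iic j by ext; simp, Fin.card_Iic]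

theorem eq_complement_of_add_le_one {B : Fin k → ℕ} (hB : B ∈ phiIndex k c)
    (hle : ∀ i : Fin k, B i + c (i.1 + 1) ≤ 1) : B = fun i => 1 - c (i.1 + 1) := by
  have htotal : ∑ i : Fin k, (B i + c (i.1 + 1)) = ∑ _i : Fin k, 1 := by
    simpa [sum_add_distrib] using sum_add_eq_of_mem_phiIndex hB
  have hone := (sum_eq_sum_iff_of_le fun i (_ : i ∈ univ) => hle i).1 htotal
  funext i
  have := hone i (mem_univ i)
  omega

theorem odd_phiTerm_complement (hpos : ∀ i ∈ Icc 1 k, 0 < a i) (hc : ∀ i ∈ Icc 1 k, c i ≤ 1)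
    (ha : ∀ i ∈ Icc 1 k, a i ≡ c i [MOD 2 ^ Nat.log 2 (2 * i)]) :
    Odd (phiTerm a fun i : Fin k => 1 - c (i.1 + 1)) := by
  rw [← Nat.not_even_iff_odd, even_iff_two_dvd, phiTerm, Nat.prime_two.prime.dvd_finsetProd_iff]
  rintro ⟨i, -, hi⟩
  have hmem := add_one_mem_Icc i
  rcases Nat.le_one_iff_eq_zero_or_eq_one.1 (hc _ hmem) with hc0 | hc1
  · have hlog : Nat.log 2 (2 * (i.1 + 1)) ≠ 0 := fun h0 => by
      have := lt_two_pow_log_two_mul (i.1 + 1)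
      rw [h0] at this
      omega
    have heven : 2 ∣ a (i.1 + 1) :=
      (dvd_pow_self 2 hlog).trans (Nat.modEq_zero_iff_dvd.1 (hc0 ▸ ha _ hmem))
    have := hpos _ hmem
    rw [hc0, Nat.sub_zero, Nat.choose_one_right] at hi
    omega
  · rw [hc1, Nat.sub_self, Nat.choose_zero_right] at hi
    omega

theorem odd_Phi_self (hpos : ∀ i ∈ Icc 1 k, 0 < a i) (hc : ∀ i ∈ Icc 1 k, c i ≤ 1)
    (ha : ∀ i ∈ Icc 1 k, a i ≡ c i [MOD 2 ^ Nat.log 2 (2 * i)]) : Odd (Phi k a c) := by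
  rw [Phi_eq_sum_phiTerm, ← add_sum_erase _ _ (complement_mem_phiIndex hc)]
  refine (odd_phiTerm_complement hpos hc ha).add_even (even_sum _ fun B hB => ?_)
  obtain ⟨hne, hB⟩ := mem_erase.1 hB
  by_contra hodd
  exact hne (eq_complement_of_add_le_one hB fun i =>
    not_lt.1 fun hi => hodd (even_phiTerm_of_one_lt hc ha hB i hi))

end Phi

theorem stmt_12_general (k r : ℕ)
    (Z : Finset ℕ) (hZU : Z ⊆ Finset.Icc 1 k) (hZcard : Z.card = r)
    (a : ℕ → ℕ) (ha : ∀ i ∈ Finset.Icc 1 k, 0 < a i)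
    (haZ : ∀ i ∈ Finset.Icc 1 k, i ∈ Z → a i ≡ 1 [MOD 2 ^ Nat.log 2 (2 * i)])
    (haC : ∀ i ∈ Finset.Icc 1 k, i ∉ Z → a i ≡ 0 [MOD 2 ^ Nat.log 2 (2 * i)]) :
    (∀ I : ℕ → ℕ, (∀ i ∈ Finset.Icc 1 k, I i ≤ 1) →
      (∑ i ∈ Finset.Icc 1 k, I i) < r → Even (Phi k a I)) ∧
    Odd (Phi k a (fun i => if i ∈ Z then 1 else 0)) := by
  set χ : ℕ → ℕ := fun i => if i ∈ Z then 1 else 0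
  have hχ : ∀ i ∈ Icc 1 k, χ i ≤ 1 := fun i _ => by
    simp only [χ]
    split_ifs <;> omega
  have haχ : ∀ i ∈ Icc 1 k, a i ≡ χ i [MOD 2 ^ Nat.log 2 (2 * i)] := fun i hi => by
    by_cases hiZ : i ∈ Z
    · simpa [χ, hiZ] using haZ i hi hiZ
    · simpa [χ, hiZ] using haC i hi hiZ
  have hsumχ : ∑ i ∈ Icc 1 k, χ i = r := by
    rw [sum_boole, filter_mem_eq_inter, inter_eq_right.2 hZU, hZcard, Nat.cast_id]
  exact ⟨fun I _ hI => even_Phi_of_sum_lt hχ haχ (hsumχ ▸ hI), odd_Phi_self ha hχ haχ⟩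

/-- Theorem 4.6 (thm01): if `a_i ≡ 1 (mod 2^{⌊log₂(2i)⌋})` for `i ∈ Z` and
`a_i ≡ 0 (mod 2^{⌊log₂(2i)⌋})` for `i ∉ Z`, where `|Z| = r ≥ 1`, then `Φ(a, I)` is
even for every 0/1-vector `I` with fewer than `r` ones, while `Φ(a, χ_Z)` is odd. -/
theorem stmt_12 (k r : ℕ) (hk : 1 ≤ k) (hr : 1 ≤ r)
    (Z : Finset ℕ) (hZU : Z ⊆ Finset.Icc 1 k) (hZcard : Z.card = r)
    (a : ℕ → ℕ) (ha : ∀ i ∈ Finset.Icc 1 k, 0 < a i)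
    (haZ : ∀ i ∈ Finset.Icc 1 k, i ∈ Z → a i ≡ 1 [MOD 2 ^ Nat.log 2 (2 * i)])
    (haC : ∀ i ∈ Finset.Icc 1 k, i ∉ Z → a i ≡ 0 [MOD 2 ^ Nat.log 2 (2 * i)]) :
    (∀ I : ℕ → ℕ, (∀ i ∈ Finset.Icc 1 k, I i ≤ 1) →
      (∑ i ∈ Finset.Icc 1 k, I i) < r → Even (Phi k a I)) ∧
    Odd (Phi k a (fun i => if i ∈ Z then 1 else 0)) :=
  stmt_12_general k r Z hZU hZcard a ha haZ haC
end

section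
/- Let k ≥ 1 and let T, Z be disjoint subsets of {1,…,k}, with C = {1,…,k} ∖ (T ∪ Z), such that for every i ∈ T one has i ≥ 2 and i − 1 ∈ C. Let a = (a_1,…,a_k) be a k-tuple of positive integers with a_i ≡ 2 (mod 2^{⌊log₂(2i)⌋}) for i ∈ T, a_i ≡ 1 (mod 2^{⌊log₂(2i)⌋}) for i ∈ Z, and a_i ≡ 0 (mod 2^{⌊log₂(2i)⌋}) for i ∈ C. Set r = |T| + |Z| and T′ = {i − 1 : i ∈ T}. Then: (i) Φ(a, I) is even for every I ∈ {0,1}^k with ε_1 + ⋯ + ε_k < r; and (ii) Φ(a, χ_{Z ∪ T′}) is odd, where χ_{Z ∪ T′} ∈ {0,1}^k is the indicator vector of Z ∪ T′. -/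
/-!
Modulo 2, Lucas's theorem shows that for `b ≤ i` (so `b < 2 ^ lg (2 i)`) the weight
`C(a_i + b - 2, b)` is odd for every `b` when `i ∈ T`, only for `b = 0` when `i ∈ Z`, and exactly
for `b ≤ 1` when `i ∈ C`. Substituting `c = B + I`, `Φ(a, I)` is a weighted count of sequences
`c ∈ 𝒮_k` of total `k`, computed position by position through the slack `j - (c_1 + ⋯ + c_j)`.
Mod 2 a `Z` position passes the slack on deterministically and a `C` position followed by a
`T` position telescopes to a single term. The hypotheses on `T` cut `1, …, k` into blocks `Z`,
`C` and `CT`, and an induction over the blocks shows that the count vanishes unless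
`ε_1 + ⋯ + ε_k ≥ |T| + |Z|`, and that it is `1` for `I = χ_{Z ∪ T′}`.
-/

open Finset

namespace PhiParity

theorem choose_modEq_choose_mod_pow {p : ℕ} [Fact p.Prime] :
    ∀ (l : ℕ) {n k : ℕ}, k < p ^ l → n.choose k ≡ (n % p ^ l).choose k [MOD p]
  | 0, n, k, hk => by
    obtain rfl : k = 0 := by simpa using hk
    simp [Nat.ModEq]
  | l + 1, n, k, hk => by
    have hk' : k / p < p ^ l := Nat.div_lt_of_lt_mul (by rwa [← pow_succ'])
    have hmod : n % p ^ (l + 1) % p = n % p := by rw [pow_succ', Nat.mod_mul_right_mod]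
    have hdiv : n % p ^ (l + 1) / p = n / p % p ^ l := by
      rw [pow_succ', Nat.mod_mul_right_div_self]
    calc n.choose k ≡ (n % p).choose (k % p) * (n / p).choose (k / p) [MOD p] :=
          Choose.choose_modEq_choose_mod_mul_choose_div_nat
      _ ≡ (n % p).choose (k % p) * (n / p % p ^ l).choose (k / p) [MOD p] :=
          (choose_modEq_choose_mod_pow l hk').mul_left _
      _ ≡ (n % p ^ (l + 1)).choose k [MOD p] := by
          rw [← hmod, ← hdiv]; exact Choose.choose_modEq_choose_mod_mul_choose_div_nat.symm

theorem even_choose_of_mod_two_pow_lt {l n b : ℕ} (hb : b < 2 ^ l) (h : n % 2 ^ l < b) :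
    Even (n.choose b) := by
  have := choose_modEq_choose_mod_pow l (n := n) hb
  rw [Nat.choose_eq_zero_of_lt h] at this
  exact Nat.even_iff.2 this

theorem odd_choose_of_mod_two_pow_eq {l n b : ℕ} (hb : b < 2 ^ l) (h : n % 2 ^ l = b) :
    Odd (n.choose b) := by
  have := choose_modEq_choose_mod_pow l (n := n) hb
  rw [h, Nat.choose_self] at this
  exact Nat.odd_iff.2 this

theorem odd_choose_of_modEq_two {l a b : ℕ} (hb : b < 2 ^ l) (hl : 2 < 2 ^ l)
    (ha : a ≡ 2 [MOD 2 ^ l]) : Odd ((a + b - 2).choose b) := by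
  have hq := Nat.div_add_mod a (2 ^ l)
  rw [ha, Nat.mod_eq_of_lt hl] at hq
  refine odd_choose_of_mod_two_pow_eq hb ?_
  rw [show a + b - 2 = b + 2 ^ l * (a / 2 ^ l) by omega, Nat.add_mul_mod_self_left,
    Nat.mod_eq_of_lt hb]

theorem odd_choose_iff_of_modEq_one {l a b : ℕ} (hb : b < 2 ^ l) (hl : 1 < 2 ^ l)
    (ha : a ≡ 1 [MOD 2 ^ l]) : Odd ((a + b - 2).choose b) ↔ b = 0 := by
  refine ⟨fun hodd => ?_, by rintro rfl; simp⟩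
  by_contra hb0
  have hq := Nat.div_add_mod a (2 ^ l)
  rw [ha, Nat.mod_eq_of_lt hl] at hq
  refine Nat.not_odd_iff_even.2 (even_choose_of_mod_two_pow_lt hb ?_) hodd
  rw [show a + b - 2 = (b - 1) + 2 ^ l * (a / 2 ^ l) by omega, Nat.add_mul_mod_self_left,
    Nat.mod_eq_of_lt (by omega)]
  omega

theorem odd_choose_iff_of_modEq_zero {l a b : ℕ} (hb : b < 2 ^ l) (hl : 1 < 2 ^ l)
    (ha : a ≡ 0 [MOD 2 ^ l]) (ha0 : 0 < a) : Odd ((a + b - 2).choose b) ↔ b ≤ 1 := by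
  have hdvd : 2 ^ l ∣ a := Nat.dvd_of_mod_eq_zero ha
  rcases Nat.lt_or_ge b 2 with hb2 | hb2
  · refine iff_of_true ?_ (by omega)
    interval_cases b
    · simp
    · have heven : Even a :=
        even_iff_two_dvd.2 ((dvd_pow_self 2 (by rintro rfl; simp at hl)).trans hdvd)
      rw [Nat.choose_one_right, show a + 1 - 2 = a - 1 by omega]
      exact Nat.Even.sub_odd ha0 heven odd_one
  · refine iff_of_false (Nat.not_odd_iff_even.2 (even_choose_of_mod_two_pow_lt hb ?_)) (by omega)
    obtain ⟨q, rfl⟩ := hdvd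
    rw [show 2 ^ l * q + b - 2 = (b - 2) + 2 ^ l * q by omega, Nat.add_mul_mod_self_left,
      Nat.mod_eq_of_lt (by omega)]
    omega

theorem lt_two_pow_log_two_mul (j : ℕ) : j < 2 ^ Nat.log 2 (2 * j) := by
  have := Nat.lt_pow_succ_log_self one_lt_two (2 * j)
  rw [pow_succ] at this
  omega

section Ballot

variable {R : Type*} [CommSemiring R]

-- `ballotSum ws s` sums `∏ w_i (c_i - e_i)` over `c ≥ e` with `c_1 + ⋯ + c_j ≤ j + s` for all `j`
-- and total `length ws + s` (see `sum_isBallot_eq_ballotSum`); `s` is the current slack.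
def ballotSum : List (ℕ × (ℕ → R)) → ℕ → R
  | [], s => if s = 0 then 1 else 0
  | (e, w) :: ws, s => ∑ b ∈ range (s + 2 - e), w b * ballotSum ws (s + 1 - (b + e))

theorem map_ballotSum {S : Type*} [CommSemiring S] (f : R →+* S) :
    ∀ (ws : List (ℕ × (ℕ → R))) (s : ℕ),
      f (ballotSum ws s) = ballotSum (ws.map fun x => (x.1, f ∘ x.2)) s
  | [], s => by simp only [ballotSum, List.map_nil]; split_ifs <;> simp
  | (e, w) :: ws, s => by simp [ballotSum, map_ballotSum f ws]

theorem ballotSum_map_range'_congr {ε : ℕ → ℕ} {f g : ℕ → ℕ → R} :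
    ∀ (n p s : ℕ), (∀ j b, p ≤ j → j < p + n → b + p ≤ s + j + 1 → f j b = g j b) →
      ballotSum ((List.range' p n).map fun j => (ε j, f j)) s =
        ballotSum ((List.range' p n).map fun j => (ε j, g j)) s
  | 0, _, _, _ => rfl
  | n + 1, p, s, h => by
    simp only [List.range'_succ, List.map_cons, ballotSum]
    refine sum_congr rfl fun b hb => ?_
    rw [mem_range] at hb
    rw [h p b le_rfl (by omega) (by omega), ballotSum_map_range'_congr n (p + 1) _
      fun j b' h₁ h₂ h₃ => h j b' (by omega) (by omega) (by omega)]

-- Reducible, so that the filter in `Phi` is literally `IsBallot 0`.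
abbrev IsBallot {k : ℕ} (s : ℕ) (c : Fin k → ℕ) : Prop :=
  (∀ j : Fin k, ∑ i ∈ univ.filter (fun i => i ≤ j), c i ≤ j.1 + 1 + s) ∧ ∑ i, c i = k + s

theorem isBallot_cons {k s x : ℕ} {c : Fin k → ℕ} :
    IsBallot s (Fin.cons x c : Fin (k + 1) → ℕ) ↔ x ≤ s + 1 ∧ IsBallot (s + 1 - x) c := by
  have hzero : ∑ i ∈ univ.filter (fun i : Fin (k + 1) => i ≤ 0),
      (Fin.cons x c : Fin (k + 1) → ℕ) i = x := by
    rw [sum_filter, Fin.sum_univ_succ]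
    simp [Fin.succ_ne_zero]
  have hsucc : ∀ j : Fin k, ∑ i ∈ univ.filter (fun i : Fin (k + 1) => i ≤ j.succ),
      (Fin.cons x c : Fin (k + 1) → ℕ) i = x + ∑ i ∈ univ.filter (fun i => i ≤ j), c i := by
    intro j
    rw [sum_filter, sum_filter, Fin.sum_univ_succ]
    simp [Fin.succ_le_succ_iff]
  simp only [IsBallot, Fin.forall_fin_succ, hzero, hsucc, Fin.sum_univ_succ, Fin.cons_zero,
    Fin.cons_succ, Fin.val_zero, Fin.val_succ]
  constructor
  · rintro ⟨⟨h₀, hs⟩, htot⟩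
    exact ⟨by omega, fun j => by have := hs j; omega, by omega⟩
  · rintro ⟨hx, hs, htot⟩
    exact ⟨⟨by omega, fun j => by have := hs j; omega⟩, by omega⟩

theorem sum_piFinset_fin_succ {M α : Type*} [AddCommMonoid M] (S : Finset α) (k : ℕ)
    (F : (Fin (k + 1) → α) → M) :
    ∑ B ∈ Fintype.piFinset (fun _ => S), F B =
      ∑ x ∈ S, ∑ B ∈ Fintype.piFinset (fun _ : Fin k => S), F (Fin.cons x B) := by
  have := filter_piFinset_eq_map_consEquiv (fun _ : Fin (k + 1) => S) (fun _ => True)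
  simp only [filter_true_of_mem (fun _ _ => trivial)] at this
  rw [this, sum_map, sum_product]
  rfl

theorem sum_isBallot_eq_ballotSum (ε : ℕ → ℕ) (w : ℕ → ℕ → R) :
    ∀ (k p s M : ℕ), s + k < M →
      ∑ B ∈ (Fintype.piFinset fun _ : Fin k => range M).filter
          (fun B => IsBallot s fun i => B i + ε (i.1 + p)), ∏ i, w (i.1 + p) (B i) =
        ballotSum ((List.range' p k).map fun j => (ε j, w j)) s
  | 0, p, s, M, _ => by
    obtain rfl | hs := eq_or_ne s 0
    · simp [ballotSum, IsBallot]
    · simp [ballotSum, IsBallot, hs, hs.symm]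
  | k + 1, p, s, M, hM => by
    have hshift : ∀ i : ℕ, i + 1 + p = i + (p + 1) := fun i => by omega
    have hcons : ∀ x (B : Fin k → ℕ),
        (fun i : Fin (k + 1) => (Fin.cons x B : Fin (k + 1) → ℕ) i + ε (i.1 + p)) =
          Fin.cons (x + ε p) fun i => B i + ε (i.1 + (p + 1)) := by
      intro x B
      funext i
      refine Fin.cases ?_ (fun i => ?_) i <;> simp [hshift]
    have hx : ∀ x, (∑ B ∈ Fintype.piFinset fun _ : Fin k => range M,
        if x + ε p ≤ s + 1 ∧ IsBallot (s + 1 - (x + ε p)) (fun i => B i + ε (i.1 + (p + 1)))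
        then w p x * ∏ i : Fin k, w (i.1 + (p + 1)) (B i) else 0) =
        if x + ε p ≤ s + 1 then w p x *
          ballotSum ((List.range' (p + 1) k).map fun j => (ε j, w j)) (s + 1 - (x + ε p))
        else 0 := by
      intro x
      split_ifs with hxs
      · rw [← sum_isBallot_eq_ballotSum ε w k (p + 1) _ M (by omega), mul_sum, sum_filter]
        simp [hxs]
      · simp [hxs]
    rw [sum_filter, sum_piFinset_fin_succ]
    simp only [hcons, isBallot_cons, Fin.prod_univ_succ, Fin.cons_zero, Fin.cons_succ,
      Fin.val_zero, Fin.val_succ, hshift, zero_add, hx]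
    rw [← sum_filter, List.range'_succ, List.map_cons, ballotSum]
    congr 1
    ext x
    simp only [mem_filter, mem_range]
    omega

end Ballot

theorem phi_eq_ballotSum (k : ℕ) (a I : ℕ → ℕ) :
    Phi k a I =
      ballotSum ((List.range' 1 k).map fun j => (I j, fun b => (a j + b - 2).choose b)) 0 :=
  sum_isBallot_eq_ballotSum I (fun j b => (a j + b - 2).choose b) k 1 0 (k + 1) (by omega)

-- Parity patterns of `b ↦ C(a_i + b - 2, b)` on `b ≤ i`, named after the paper's `Z`, `C`, `T`.
-- A slot `(ε_i, κ_i)` pairs such a pattern with the shift `ε_i`.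
inductive Kind
  | z
  | c
  | t

def Kind.weight : Kind → ℕ → ZMod 2
  | .z, b => if b = 0 then 1 else 0
  | .c, b => if b ≤ 1 then 1 else 0
  | .t, _ => 1

def Kind.rank : Kind → ℕ
  | .c => 0
  | _ => 1

def slotSum (L : List (ℕ × Kind)) (s : ℕ) : ZMod 2 :=
  ballotSum (L.map fun x => (x.1, x.2.weight)) s

theorem slotSum_nil (s : ℕ) : slotSum [] s = if s = 0 then 1 else 0 := rfl

theorem slotSum_cons_z (e : ℕ) (L : List (ℕ × Kind)) (s : ℕ) :
    slotSum ((e, .z) :: L) s = if e ≤ s + 1 then slotSum L (s + 1 - e) else 0 := by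
  simp only [slotSum, List.map_cons, ballotSum, Kind.weight, ite_mul, one_mul, zero_mul,
    sum_ite_eq', mem_range, zero_add]
  congr 1
  exact propext (by omega)

theorem slotSum_cons_c (e : ℕ) (L : List (ℕ × Kind)) (s : ℕ) :
    slotSum ((e, .c) :: L) s =
      (if e ≤ s + 1 then slotSum L (s + 1 - e) else 0) +
        if e ≤ s then slotSum L (s - e) else 0 := by
  simp only [slotSum, List.map_cons, ballotSum, Kind.weight, ite_mul, one_mul, zero_mul]
  rcases lt_trichotomy e (s + 1) with he | rfl | he
  · obtain ⟨m, hm⟩ : ∃ m, s + 2 - e = m + 2 := ⟨s - e, by omega⟩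
    rw [hm, sum_range_succ', sum_range_succ', if_pos (by omega), if_pos (by omega),
      show s + 1 - (1 + e) = s - e by omega]
    simp only [Nat.reduceLeDiff, if_false, sum_const_zero, zero_add]
    rw [if_pos he.le, if_pos (by omega), add_comm]
  · simp
  · rw [show s + 2 - e = 0 by omega]
    simp [show ¬e ≤ s + 1 by omega, show ¬e ≤ s by omega]

theorem slotSum_cons_t (f : ℕ) (L : List (ℕ × Kind)) (u : ℕ) :
    slotSum ((f, .t) :: L) u = ∑ j ∈ range (u + 2 - f), slotSum L j := by
  simp only [slotSum, List.map_cons, ballotSum, Kind.weight, one_mul]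
  rw [← sum_range_reflect]
  refine sum_congr rfl fun b hb => ?_
  rw [mem_range] at hb
  congr 1
  omega

theorem slotSum_cons_t_succ_add (f : ℕ) (L : List (ℕ × Kind)) (u : ℕ) :
    slotSum ((f, .t) :: L) (u + 1) + slotSum ((f, .t) :: L) u =
      if f ≤ u + 2 then slotSum L (u + 2 - f) else 0 := by
  rw [slotSum_cons_t, slotSum_cons_t]
  split_ifs with hf
  · rw [show u + 1 + 2 - f = u + 2 - f + 1 by omega, sum_range_succ, add_right_comm,
      CharTwo.add_self_eq_zero, zero_add]
  · rw [show u + 1 + 2 - f = 0 by omega, show u + 2 - f = 0 by omega]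
    simp

theorem slotSum_cons_c_cons_t (e f : ℕ) (L : List (ℕ × Kind)) (s : ℕ) :
    slotSum ((e, .c) :: (f, .t) :: L) s =
      if e ≤ s then (if f ≤ s + 2 - e then slotSum L (s + 2 - e - f) else 0)
      else if e = s + 1 then ∑ j ∈ range (2 - f), slotSum L j else 0 := by
  rw [slotSum_cons_c]
  rcases lt_trichotomy e (s + 1) with he | rfl | he
  · rw [if_pos he.le, if_pos (by omega), if_pos (by omega), show s + 1 - e = s - e + 1 by omega,
      slotSum_cons_t_succ_add, show s - e + 2 = s + 2 - e by omega]
  · simp [slotSum_cons_t]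
  · simp [show ¬e ≤ s + 1 by omega, show ¬e ≤ s by omega, show e ≠ s + 1 by omega]

inductive Admissible : List (ℕ × Kind) → Prop
  | nil : Admissible []
  | z (e : ℕ) {L : List (ℕ × Kind)} : Admissible L → Admissible ((e, .z) :: L)
  | c (e : ℕ) {L : List (ℕ × Kind)} : Admissible L → Admissible ((e, .c) :: L)
  | ct (e f : ℕ) {L : List (ℕ × Kind)} : Admissible L → Admissible ((e, .c) :: (f, .t) :: L)

-- The slot words of `I = χ_{Z ∪ T′}`.
inductive Canonical : List (ℕ × Kind) → Prop
  | nil : Canonical []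
  | z {L : List (ℕ × Kind)} : Canonical L → Canonical ((1, .z) :: L)
  | c {L : List (ℕ × Kind)} : Canonical L → Canonical ((0, .c) :: L)
  | ct {L : List (ℕ × Kind)} : Canonical L → Canonical ((1, .c) :: (0, .t) :: L)

def offsetSum (L : List (ℕ × Kind)) : ℕ := (L.map Prod.fst).sum

def rank (L : List (ℕ × Kind)) : ℕ := (L.map fun x => x.2.rank).sum

@[simp] theorem offsetSum_cons (x : ℕ × Kind) (L : List (ℕ × Kind)) :
    offsetSum (x :: L) = x.1 + offsetSum L := by simp [offsetSum]

@[simp] theorem rank_cons (x : ℕ × Kind) (L : List (ℕ × Kind)) :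
    rank (x :: L) = x.2.rank + rank L := by simp [rank]

theorem slotSum_eq_zero_of_lt {L : List (ℕ × Kind)} (hL : Admissible L) :
    ∀ s, offsetSum L < s + rank L → slotSum L s = 0 := by
  induction hL with
  | nil =>
    intro s hs
    simp only [offsetSum, rank, List.map_nil, List.sum_nil] at hs
    rw [slotSum_nil, if_neg (by omega)]
  | z e _ ih =>
    intro s hs
    simp only [offsetSum_cons, rank_cons, Kind.rank] at hs
    rw [slotSum_cons_z, ih (s + 1 - e) (by omega), ite_self]
  | c e _ ih =>
    intro s hs
    simp only [offsetSum_cons, rank_cons, Kind.rank] at hs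
    rw [slotSum_cons_c, ih (s + 1 - e) (by omega), ih (s - e) (by omega), ite_self, ite_self,
      add_zero]
  | ct e f _ ih =>
    intro s hs
    simp only [offsetSum_cons, rank_cons, Kind.rank] at hs
    rw [slotSum_cons_c_cons_t]
    split_ifs
    · exact ih _ (by omega)
    · rfl
    · exact sum_eq_zero fun j hj => ih j (by rw [mem_range] at hj; omega)
    · rfl

theorem slotSum_of_canonical {L : List (ℕ × Kind)} (hL : Canonical L) :
    ∀ s, slotSum L s = if s = 0 then 1 else 0 := by
  induction hL with
  | nil => exact slotSum_nil
  | z _ ih =>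
    intro s
    rw [slotSum_cons_z, if_pos (by omega), Nat.add_sub_cancel, ih]
  | c _ ih =>
    intro s
    rw [slotSum_cons_c, if_pos (by omega), if_pos (by omega), ih, ih]
    simp
  | ct _ ih =>
    intro s
    rw [slotSum_cons_c_cons_t]
    rcases Nat.eq_zero_or_pos s with rfl | hs
    · simp [ih]
    · rw [if_pos (show 1 ≤ s from hs), if_pos (Nat.zero_le _), ih, if_neg (by omega),
        if_neg (by omega)]

section Slots

variable (T Z : Finset ℕ)

def kindOf (j : ℕ) : Kind := if j ∈ T then .t else if j ∈ Z then .z else .c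

def slots (I : ℕ → ℕ) (p n : ℕ) : List (ℕ × Kind) :=
  (List.range' p n).map fun j => (I j, kindOf T Z j)

variable {T Z}

theorem admissible_slots (I : ℕ → ℕ) (hT : ∀ i ∈ T, i - 1 ∉ T ∧ i - 1 ∉ Z) :
    ∀ n p, p ∉ T → (∀ i ∈ T, i < p + n) → Admissible (slots T Z I p n)
  | 0, _, _, _ => .nil
  | n + 1, p, hp, hlt => by
    by_cases hp₁ : p + 1 ∈ T
    · obtain ⟨m, rfl⟩ : ∃ m, n = m + 1 := ⟨n - 1, by have := hlt _ hp₁; omega⟩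
      have hpZ : p ∉ Z := by simpa using (hT _ hp₁).2
      have hp₂ : p + 2 ∉ T := fun h => (hT _ h).1 (by simpa using hp₁)
      have htail := admissible_slots I hT m (p + 2) hp₂ fun i hi => by have := hlt i hi; omega
      simp only [slots, List.range'_succ, List.map_cons, kindOf, if_neg hp, if_neg hpZ,
        if_pos hp₁] at htail ⊢
      exact .ct _ _ htail
    · have htail := admissible_slots I hT n (p + 1) hp₁ fun i hi => by have := hlt i hi; omega
      simp only [slots, List.range'_succ, List.map_cons, kindOf, if_neg hp] at htail ⊢
      split_ifs
      exacts [.z _ htail, .c _ htail]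

theorem canonical_slots (hT : ∀ i ∈ T, i - 1 ∉ T ∧ i - 1 ∉ Z) (hTZ : Disjoint T Z) :
    ∀ n p, p ∉ T → (∀ i ∈ T, i < p + n) →
      Canonical (slots T Z (fun j => if j ∈ Z ∨ j + 1 ∈ T then 1 else 0) p n)
  | 0, _, _, _ => .nil
  | n + 1, p, hp, hlt => by
    by_cases hp₁ : p + 1 ∈ T
    · obtain ⟨m, rfl⟩ : ∃ m, n = m + 1 := ⟨n - 1, by have := hlt _ hp₁; omega⟩
      have hpZ : p ∉ Z := by simpa using (hT _ hp₁).2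
      have hp₁Z : p + 1 ∉ Z := disjoint_left.1 hTZ hp₁
      have hp₂ : p + 2 ∉ T := fun h => (hT _ h).1 (by simpa using hp₁)
      have htail := canonical_slots hT hTZ m (p + 2) hp₂ fun i hi => by have := hlt i hi; omega
      simp only [slots, List.range'_succ, List.map_cons, kindOf, if_neg hp, if_neg hpZ,
        hp₁, hp₁Z, hp₂, or_true, or_false] at htail ⊢
      exact .ct htail
    · have htail := canonical_slots hT hTZ n (p + 1) hp₁ fun i hi => by have := hlt i hi; omega
      simp only [slots, List.range'_succ, List.map_cons, kindOf, if_neg hp, hp₁, or_false]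
        at htail ⊢
      split_ifs
      exacts [.z htail, .c htail]

theorem offsetSum_slots (I : ℕ → ℕ) (k : ℕ) :
    offsetSum (slots T Z I 1 k) = ∑ i ∈ Icc 1 k, I i := by
  rw [offsetSum, slots, List.map_map, ← List.toFinset_range'_1_1,
    List.sum_toFinset _ List.nodup_range']
  rfl

theorem rank_slots (I : ℕ → ℕ) (k : ℕ) (hTZ : T ∪ Z ⊆ Icc 1 k) :
    rank (slots T Z I 1 k) = #(T ∪ Z) := by
  have hrank : ∀ j, (kindOf T Z j).rank = if j ∈ T ∪ Z then 1 else 0 := by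
    intro j
    simp only [kindOf, mem_union]
    split_ifs <;> simp_all [Kind.rank]
  rw [rank, slots, List.map_map, ← List.sum_toFinset _ List.nodup_range',
    List.toFinset_range'_1_1]
  simp only [Function.comp_apply, hrank, sum_boole, Nat.cast_id, filter_mem_eq_inter,
    inter_eq_right.2 hTZ]

end Slots

theorem mem_image_sub_one_iff {T : Finset ℕ} (hT : ∀ i ∈ T, 1 ≤ i) {j : ℕ} :
    j ∈ T.image (· - 1) ↔ j + 1 ∈ T := by
  simp only [mem_image]
  constructor
  · rintro ⟨i, hi, rfl⟩
    rwa [Nat.sub_add_cancel (hT i hi)]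
  · exact fun h => ⟨j + 1, h, rfl⟩

theorem natCast_zmod_two_eq_ite {n : ℕ} {P : Prop} [Decidable P] (h : Odd n ↔ P) :
    (n : ZMod 2) = if P then 1 else 0 := by
  split_ifs with hP
  · exact ZMod.natCast_eq_one_iff_odd.2 (h.2 hP)
  · exact ZMod.natCast_eq_zero_iff_even.2 (Nat.not_odd_iff_even.1 (mt h.1 hP))

theorem natCast_choose_eq_weight {T Z : Finset ℕ} {a j b : ℕ} (hj : 1 ≤ j) (hb : b ≤ j)
    (hT : j ∈ T → 2 ≤ j ∧ a ≡ 2 [MOD 2 ^ Nat.log 2 (2 * j)])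
    (hZ : j ∈ Z → a ≡ 1 [MOD 2 ^ Nat.log 2 (2 * j)])
    (hC : j ∉ T → j ∉ Z → 0 < a ∧ a ≡ 0 [MOD 2 ^ Nat.log 2 (2 * j)]) :
    ((a + b - 2).choose b : ZMod 2) = (kindOf T Z j).weight b := by
  have hjl := lt_two_pow_log_two_mul j
  unfold kindOf
  split_ifs with h₁ h₂
  · obtain ⟨hj₂, haT⟩ := hT h₁
    exact ZMod.natCast_eq_one_iff_odd.2 (odd_choose_of_modEq_two (by omega) (by omega) haT)
  · exact natCast_zmod_two_eq_ite (odd_choose_iff_of_modEq_one (by omega) (by omega) (hZ h₂))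
  · obtain ⟨ha, haC⟩ := hC h₁ h₂
    exact natCast_zmod_two_eq_ite (odd_choose_iff_of_modEq_zero (by omega) (by omega) haC ha)

theorem natCast_phi_eq_slotSum {T Z : Finset ℕ} {k : ℕ} {a : ℕ → ℕ} (I : ℕ → ℕ)
    (hw : ∀ j ∈ Icc 1 k, ∀ b ≤ j, ((a j + b - 2).choose b : ZMod 2) = (kindOf T Z j).weight b) :
    (Phi k a I : ZMod 2) = slotSum (slots T Z I 1 k) 0 := by
  rw [phi_eq_ballotSum, ← Nat.coe_castRingHom, map_ballotSum, slotSum, slots, List.map_map,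
    List.map_map]
  exact ballotSum_map_range'_congr k 1 0 fun j b h₁ h₂ h₃ =>
    hw j (mem_Icc.2 ⟨h₁, by omega⟩) b (by omega)

end PhiParity

open PhiParity

theorem stmt_13_general (k r : ℕ)
    (T Z C : Finset ℕ) (hTU : T ⊆ Finset.Icc 1 k) (hZU : Z ⊆ Finset.Icc 1 k)
    (hdisj : Disjoint T Z) (hC : C = Finset.Icc 1 k \ (T ∪ Z))
    (hpred : ∀ i ∈ T, 2 ≤ i ∧ i - 1 ∈ C)
    (a : ℕ → ℕ) (ha : ∀ i ∈ Finset.Icc 1 k, 0 < a i)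
    (haT : ∀ i ∈ T, a i ≡ 2 [MOD 2 ^ Nat.log 2 (2 * i)])
    (haZ : ∀ i ∈ Z, a i ≡ 1 [MOD 2 ^ Nat.log 2 (2 * i)])
    (haC : ∀ i ∈ C, a i ≡ 0 [MOD 2 ^ Nat.log 2 (2 * i)])
    (hr : r = T.card + Z.card) :
    (∀ I : ℕ → ℕ, (∀ i ∈ Finset.Icc 1 k, I i ≤ 1) →
      (∑ i ∈ Finset.Icc 1 k, I i) < r → Even (Phi k a I)) ∧
    Odd (Phi k a (fun i => if i ∈ Z ∪ T.image (· - 1) then 1 else 0)) := by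
  have hT : ∀ i ∈ T, i - 1 ∉ T ∧ i - 1 ∉ Z := fun i hi => by
    have := (hpred i hi).2
    rw [hC, mem_sdiff, mem_union, not_or] at this
    exact this.2
  have h1T : 1 ∉ T := fun h => by have := (hpred 1 h).1; omega
  have hTk : ∀ i ∈ T, i < 1 + k := fun i hi => by have := mem_Icc.1 (hTU hi); omega
  have hPhi : ∀ I, (Phi k a I : ZMod 2) = slotSum (slots T Z I 1 k) 0 := fun I =>
    natCast_phi_eq_slotSum I fun j hj b hb =>
      natCast_choose_eq_weight (mem_Icc.1 hj).1 hb (fun h => ⟨(hpred j h).1, haT j h⟩) (haZ j)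
        fun h₁ h₂ => ⟨ha j hj, haC j (by rw [hC, mem_sdiff, mem_union]; tauto)⟩
  refine ⟨fun I _ hI => ?_, ?_⟩
  · rw [← ZMod.natCast_eq_zero_iff_even, hPhi]
    refine slotSum_eq_zero_of_lt (admissible_slots I hT k 1 h1T hTk) 0 ?_
    rw [offsetSum_slots, rank_slots I k (union_subset hTU hZU), card_union_of_disjoint hdisj]
    omega
  · have hχ : (fun i => if i ∈ Z ∪ T.image (· - 1) then 1 else 0) =
        fun j => if j ∈ Z ∨ j + 1 ∈ T then 1 else 0 := by
      funext j
      simp only [mem_union, mem_image_sub_one_iff fun i hi => (mem_Icc.1 (hTU hi)).1]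
    rw [← ZMod.natCast_eq_one_iff_odd, hPhi, hχ,
      slotSum_of_canonical (canonical_slots hT hdisj k 1 h1T hTk)]
    rfl

/-- Theorem 4.8 (thm02): with disjoint `T, Z ⊆ {1,…,k}`, `C = {1,…,k} ∖ (T ∪ Z)`,
each `i ∈ T` having `i ≥ 2` and `i - 1 ∈ C`, and `a_i ≡ 2, 1, 0 (mod 2^{⌊log₂(2i)⌋})`
according as `i ∈ T`, `i ∈ Z`, `i ∈ C`: setting `r = |T| + |Z|` and
`T′ = {i-1 : i ∈ T}`, `Φ(a, I)` is even for every 0/1-vector `I` with fewer than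
`r` ones, while `Φ(a, χ_{Z ∪ T′})` is odd. -/
theorem stmt_13 (k r : ℕ) (hk : 1 ≤ k)
    (T Z C : Finset ℕ) (hTU : T ⊆ Finset.Icc 1 k) (hZU : Z ⊆ Finset.Icc 1 k)
    (hdisj : Disjoint T Z) (hC : C = Finset.Icc 1 k \ (T ∪ Z))
    (hpred : ∀ i ∈ T, 2 ≤ i ∧ i - 1 ∈ C)
    (a : ℕ → ℕ) (ha : ∀ i ∈ Finset.Icc 1 k, 0 < a i)
    (haT : ∀ i ∈ T, a i ≡ 2 [MOD 2 ^ Nat.log 2 (2 * i)])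
    (haZ : ∀ i ∈ Z, a i ≡ 1 [MOD 2 ^ Nat.log 2 (2 * i)])
    (haC : ∀ i ∈ C, a i ≡ 0 [MOD 2 ^ Nat.log 2 (2 * i)])
    (hr : r = T.card + Z.card) :
    (∀ I : ℕ → ℕ, (∀ i ∈ Finset.Icc 1 k, I i ≤ 1) →
      (∑ i ∈ Finset.Icc 1 k, I i) < r → Even (Phi k a I)) ∧
    Odd (Phi k a (fun i => if i ∈ Z ∪ T.image (· - 1) then 1 else 0)) :=
  stmt_13_general k r T Z C hTU hZU hdisj hC hpred a ha haT haZ haC hr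
end

section
/- Let n ≥ 3 and let ℓ = (ℓ_1,…,ℓ_n) be a vector of positive integers whose total sum L = ℓ_1 + ⋯ + ℓ_n is odd, and such that ℓ_n ≤ ℓ_1 + ⋯ + ℓ_{n−1}. Define the (n+1)-tuple ℓ′ = (ℓ_1,…,ℓ_{n−1}, (L+1)/2 − ℓ_n, (L+1)/2). Then: (i) all entries of ℓ′ are positive integers; (ii) for every S ⊆ {1,…,n−1}, the set S ∪ {n} is short for ℓ if and only if S ∪ {n+1} is short for ℓ′; (iii) no subset of {1,…,n+1} containing both n and n+1 is short for ℓ′; and (iv) if moreover ℓ is nondecreasing and ℓ_n + ℓ_{n−1} ≤ ℓ_1 + ⋯ + ℓ_{n−2} + 1, then ℓ′ is nondecreasing. -/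
/-- For a 1-indexed length vector `ℓ` of length `n`, a subset `T ⊆ {1,…,n}` is
*short* if `Σ_{i∈T} ℓ_i < Σ_{i∉T} ℓ_i`. -/
def IsShort (n : ℕ) (ℓ : ℕ → ℕ) (T : Finset ℕ) : Prop :=
  ∑ i ∈ T, ℓ i < ∑ i ∈ Finset.Icc 1 n \ T, ℓ i

/-- The stabilization construction: appending `(L+1)/2 - ℓ_n` and `(L+1)/2` (with the
old last entry removed… more precisely, replacing `ℓ_n` by these two entries) produces
an `(n+1)`-vector `ℓ′` with positive entries, the same short sets containing the last
index, no short set containing both `n` and `n+1`, and `ℓ′` nondecreasing provided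
`ℓ` is nondecreasing and `ℓ_n + ℓ_{n-1} ≤ ℓ_1 + ⋯ + ℓ_{n-2} + 1`. -/
theorem stmt_15 (n : ℕ) (hn : 3 ≤ n) (ℓ : ℕ → ℕ)
    (hpos : ∀ i ∈ Finset.Icc 1 n, 0 < ℓ i)
    (L : ℕ) (hL : L = ∑ i ∈ Finset.Icc 1 n, ℓ i) (hodd : Odd L)
    (hlast : ℓ n ≤ ∑ i ∈ Finset.Icc 1 (n - 1), ℓ i)
    (ℓ' : ℕ → ℕ)
    (hdef : ℓ' = fun i =>
      if i ≤ n - 1 then ℓ i else if i = n then (L + 1) / 2 - ℓ n else (L + 1) / 2) :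
    (∀ i ∈ Finset.Icc 1 (n + 1), 0 < ℓ' i) ∧
    (∀ S ⊆ Finset.Icc 1 (n - 1),
      (IsShort n ℓ (insert n S) ↔ IsShort (n + 1) ℓ' (insert (n + 1) S))) ∧
    (∀ T ⊆ Finset.Icc 1 (n + 1), n ∈ T → n + 1 ∈ T → ¬ IsShort (n + 1) ℓ' T) ∧
    ((∀ i j, 1 ≤ i → i ≤ j → j ≤ n → ℓ i ≤ ℓ j) →
      ℓ n + ℓ (n - 1) ≤ (∑ i ∈ Finset.Icc 1 (n - 2), ℓ i) + 1 →
      ∀ i j, 1 ≤ i → i ≤ j → j ≤ n + 1 → ℓ' i ≤ ℓ' j) := by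
  obtain ⟨k, hk⟩ := hodd
  set A := ∑ i ∈ Finset.Icc 1 (n - 1), ℓ i with hAdef
  have hnot : n ∉ Finset.Icc 1 (n - 1) := by simp; omega
  have hIcc : Finset.Icc 1 n = insert n (Finset.Icc 1 (n - 1)) := by
    ext x; simp; omega
  have hA : ℓ n + A = L := by rw [hL, hIcc, Finset.sum_insert hnot]
  have hlnk : ℓ n ≤ k := by omega
  have hM : (L + 1) / 2 = k + 1 := by omega
  have hl'lt : ∀ i ≤ n - 1, ℓ' i = ℓ i := by
    intro i hi; rw [hdef]; simp [hi]
  have hl'n : ℓ' n = k + 1 - ℓ n := by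
    rw [hdef]; simp only [hM]; rw [if_neg (by omega)]; simp
  have hl'n1 : ℓ' (n + 1) = k + 1 := by
    rw [hdef]; simp only [hM]; rw [if_neg (by omega), if_neg (by omega)]
  have hl'A : ∑ i ∈ Finset.Icc 1 (n - 1), ℓ' i = A := by
    apply Finset.sum_congr rfl; intro i hi
    exact hl'lt i (Finset.mem_Icc.mp hi).2
  have hnot1 : n + 1 ∉ insert n (Finset.Icc 1 (n - 1)) := by simp
  have hIcc1 : Finset.Icc 1 (n + 1) = insert (n + 1) (insert n (Finset.Icc 1 (n - 1))) := by
    ext x; simp; omega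
  have htot' : ∑ i ∈ Finset.Icc 1 (n + 1), ℓ' i = (k + 1) + ((k + 1 - ℓ n) + A) := by
    rw [hIcc1, Finset.sum_insert hnot1, Finset.sum_insert hnot, hl'A, hl'n, hl'n1]
  have hpos' : ∀ i ∈ Finset.Icc 1 (n + 1), 0 < ℓ' i := by
    intro i hi
    simp only [Finset.mem_Icc] at hi
    rcases le_or_gt i (n - 1) with h | h
    · rw [hl'lt i h]; exact hpos i (Finset.mem_Icc.mpr ⟨hi.1, by omega⟩)
    · rcases eq_or_lt_of_le hi.2 with h2 | h2
      · have : i = n + 1 := h2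
        rw [this, hl'n1]; omega
      · have hin : i = n := by omega
        rw [hin, hl'n]
        have := hpos n (Finset.mem_Icc.mpr ⟨by omega, le_refl n⟩)
        omega
  refine ⟨hpos', ?_, ?_, ?_⟩
  · intro S hS
    have hnS : n ∉ S := fun h => hnot (hS h)
    have hn1S : n + 1 ∉ S := by
      intro h; have := Finset.mem_Icc.mp (hS h); omega
    have hsub : insert n S ⊆ Finset.Icc 1 n := by
      rw [hIcc]; exact Finset.insert_subset_insert _ hS
    have hsub' : insert (n + 1) S ⊆ Finset.Icc 1 (n + 1) := by
      rw [hIcc1]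
      exact Finset.insert_subset_insert _ (fun x hx => Finset.mem_insert_of_mem (hS hx))
    have hsA : ∑ i ∈ S, ℓ i ≤ A := Finset.sum_le_sum_of_subset hS
    have hsS' : ∑ i ∈ S, ℓ' i = ∑ i ∈ S, ℓ i := by
      apply Finset.sum_congr rfl; intro i hi
      exact hl'lt i (Finset.mem_Icc.mp (hS hi)).2
    have e1 := Finset.sum_sdiff hsub (f := ℓ)
    have e2 := Finset.sum_sdiff hsub' (f := ℓ')
    unfold IsShort
    rw [Finset.sum_insert hnS, Finset.sum_insert hn1S, hsS', hl'n1]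
    rw [Finset.sum_insert hnS] at e1
    rw [Finset.sum_insert hn1S, hsS', hl'n1, htot'] at e2
    rw [← hL] at e1
    omega
  · intro T hT hnT hn1T
    have hpair : {n, n + 1} ⊆ T := by
      intro x hx; simp at hx; rcases hx with h | h <;> simp [h, hnT, hn1T]
    have hge : (k + 1 - ℓ n) + (k + 1) ≤ ∑ i ∈ T, ℓ' i := by
      calc (k + 1 - ℓ n) + (k + 1) = ∑ i ∈ ({n, n + 1} : Finset ℕ), ℓ' i := by
            rw [Finset.sum_pair (by omega : n ≠ n + 1), hl'n, hl'n1]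
        _ ≤ ∑ i ∈ T, ℓ' i := Finset.sum_le_sum_of_subset hpair
    have e := Finset.sum_sdiff hT (f := ℓ')
    rw [htot'] at e
    unfold IsShort
    omega
  · intro hmono hsum2
    have hnot2 : n - 1 ∉ Finset.Icc 1 (n - 2) := by simp; omega
    have hIcc2 : Finset.Icc 1 (n - 1) = insert (n - 1) (Finset.Icc 1 (n - 2)) := by
      ext x; simp; omega
    have hB : ℓ (n - 1) + ∑ i ∈ Finset.Icc 1 (n - 2), ℓ i = A := by
      rw [hAdef, hIcc2, Finset.sum_insert hnot2]
    have hkey : ℓ (n - 1) + ℓ n ≤ k + 1 := by omega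
    intro i j hi hij hj
    rcases le_or_gt j (n - 1) with h | h
    · rw [hl'lt i (le_trans hij h), hl'lt j h]
      exact hmono i j hi hij (by omega)
    · rcases eq_or_lt_of_le hj with h2 | h2
      · rw [h2, hl'n1]
        rcases le_or_gt i (n - 1) with h3 | h3
        · rw [hl'lt i h3]
          have := hmono i n hi (by omega) (le_refl n)
          omega
        · rcases eq_or_lt_of_le hij with h4 | h4
          · rw [h4, h2, hl'n1]
          · have hin : i = n := by omega
            rw [hin, hl'n]; omega
      · have hjn : j = n := by omega
        rw [hjn, hl'n]
        rcases le_or_gt i (n - 1) with h3 | h3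
        · rw [hl'lt i h3]
          have := hmono i (n - 1) hi h3 (by omega)
          omega
        · have hin : i = n := by omega
          rw [hin, hl'n]
end

section
/- Let n ≥ 4 and let ℓ = (ℓ_1,…,ℓ_n) be a nondecreasing vector of positive integers with odd total sum and with ℓ_n < ℓ_1 + ⋯ + ℓ_{n−1}. Then there exists a nondecreasing vector ℓ* = (ℓ*_1,…,ℓ*_n) of positive integers with odd total sum such that ℓ*_n + ℓ*_{n−1} ≤ ℓ*_1 + ⋯ + ℓ*_{n−2} + 1 and, for every S ⊆ {1,…,n−1}, the set S ∪ {n} is short for ℓ* if and only if S ∪ {n} is short for ℓ. -/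
/-- Every generic (odd total sum) nondecreasing integer length vector is equivalent,
preserving the short subsets containing `n`, to one satisfying
`ℓ_n + ℓ_{n-1} ≤ ℓ_1 + ⋯ + ℓ_{n-2} + 1`. -/
theorem stmt_16 (n : ℕ) (hn : 4 ≤ n) (ℓ : ℕ → ℕ)
    (hpos : ∀ i ∈ Finset.Icc 1 n, 0 < ℓ i)
    (hmono : ∀ i j, 1 ≤ i → i ≤ j → j ≤ n → ℓ i ≤ ℓ j)
    (hodd : Odd (∑ i ∈ Finset.Icc 1 n, ℓ i))
    (hne : ℓ n < ∑ i ∈ Finset.Icc 1 (n - 1), ℓ i) :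
    ∃ ℓs : ℕ → ℕ,
      (∀ i ∈ Finset.Icc 1 n, 0 < ℓs i) ∧
      (∀ i j, 1 ≤ i → i ≤ j → j ≤ n → ℓs i ≤ ℓs j) ∧
      Odd (∑ i ∈ Finset.Icc 1 n, ℓs i) ∧
      ℓs n + ℓs (n - 1) ≤ (∑ i ∈ Finset.Icc 1 (n - 2), ℓs i) + 1 ∧
      ∀ S ⊆ Finset.Icc 1 (n - 1),
        (IsShort n ℓs (insert n S) ↔ IsShort n ℓ (insert n S)) := by
  classical
  set A : Finset ℕ := Finset.Icc 1 (n - 1) with hA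
  set A2 : Finset ℕ := Finset.Icc 1 (n - 2) with hA2
  have hnA : n ∉ A := by simp [hA, Finset.mem_Icc]; omega
  have hsplitn : Finset.Icc 1 n = insert n A := by
    ext i; simp [hA, Finset.mem_Icc]; omega
  have hn1A2 : (n - 1) ∉ A2 := by simp [hA2, Finset.mem_Icc]; omega
  have hsplitA : A = insert (n - 1) A2 := by
    ext i; simp [hA, hA2, Finset.mem_Icc]; omega
  set SL := ∑ i ∈ A, ℓ i with hSL
  have hsumn : ∑ i ∈ Finset.Icc 1 n, ℓ i = ℓ n + SL := by
    rw [hsplitn, Finset.sum_insert hnA]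
  obtain ⟨k, hk⟩ := hodd
  obtain ⟨r, hr⟩ : ∃ r, SL = ℓ n + 2 * r + 1 := ⟨k - ℓ n, by omega⟩
  set F : Finset ℕ := A.filter (fun i => ℓ i ≤ r) with hF
  set T := ∑ i ∈ F, ℓ i with hT
  set R := min r T with hR
  set a : ℕ → ℕ := fun i => min (ℓ i) (R + 1) with ha
  have ha' : ∀ i, a i = min (ℓ i) (R + 1) := fun _ => rfl
  have haF : ∀ i ∈ F, a i = ℓ i := by
    intro i hi
    have h1 : ℓ i ≤ T := Finset.single_le_sum (fun j _ => Nat.zero_le _) hi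
    have h2 : ℓ i ≤ r := (Finset.mem_filter.mp hi).2
    rw [ha' i]; omega
  have hSLsplit : SL = ℓ (n - 1) + ∑ i ∈ A2, ℓ i := by
    rw [hSL, hsplitA, Finset.sum_insert hn1A2]
  have hmn1 : ℓ (n - 1) ≤ ℓ n := hmono (n - 1) n (by omega) (by omega) le_rfl
  set SA := ∑ i ∈ A, a i with hSA
  have hSAsplit : SA = a (n - 1) + ∑ i ∈ A2, a i := by
    rw [hSA, hsplitA, Finset.sum_insert hn1A2]
  have hkey : 2 * R + 1 ≤ ∑ i ∈ A2, a i := by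
    by_cases hc : ℓ (n - 2) ≤ r
    · have hsub : A2 ⊆ F := by
        intro i hi
        have hi' := Finset.mem_Icc.mp (by simpa [hA2] using hi)
        have hle : ℓ i ≤ ℓ (n - 2) := hmono i (n - 2) (by omega) (by omega) (by omega)
        refine Finset.mem_filter.mpr ⟨?_, by omega⟩
        simp [hA, Finset.mem_Icc]; omega
      have hT2 : ∑ i ∈ A2, ℓ i ≤ T := Finset.sum_le_sum_of_subset hsub
      have heq : ∑ i ∈ A2, a i = ∑ i ∈ A2, ℓ i :=
        Finset.sum_congr rfl (fun i hi => haF i (hsub hi))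
      omega
    · have hn2A2 : (n - 2) ∈ A2 := by simp [hA2, Finset.mem_Icc]; omega
      have hFsub : F ⊆ A2 := by
        intro i hi
        have hi1 := Finset.mem_filter.mp hi
        have hi' := Finset.mem_Icc.mp (by simpa [hA] using hi1.1)
        simp only [hA2, Finset.mem_Icc]
        refine ⟨by omega, ?_⟩
        by_contra hcon
        have : ℓ (n - 2) ≤ ℓ i := hmono (n - 2) i (by omega) (by omega) (by omega)
        omega
      have hn2F : (n - 2) ∉ F := fun hcon => hc (Finset.mem_filter.mp hcon).2
      have hins : insert (n - 2) F ⊆ A2 := by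
        intro i hi
        rcases Finset.mem_insert.mp hi with h | h
        · subst h; exact hn2A2
        · exact hFsub h
      have hsum1 : ∑ i ∈ insert (n - 2) F, a i ≤ ∑ i ∈ A2, a i :=
        Finset.sum_le_sum_of_subset hins
      have hsum2 : ∑ i ∈ insert (n - 2) F, a i = a (n - 2) + ∑ i ∈ F, a i :=
        Finset.sum_insert hn2F
      have haN2 : a (n - 2) = R + 1 := by rw [ha' (n-2)]; omega
      have hFa : ∑ i ∈ F, a i = T := Finset.sum_congr rfl haF
      omega
  have han1 : a (n - 1) ≤ R + 1 := by rw [ha' (n-1)]; omega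
  have han1pos : 1 ≤ a (n - 1) := by
    have h1 : 0 < ℓ (n - 1) := hpos (n - 1) (by simp [Finset.mem_Icc]; omega)
    rw [ha' (n-1)]; omega
  have hkey' : 2 * R + 1 + a (n - 1) ≤ SA := by omega
  have hiff : ∀ S ⊆ A, (∑ i ∈ S, a i ≤ R ↔ ∑ i ∈ S, ℓ i ≤ r) := by
    intro S hS
    constructor
    · intro h
      have heq : ∑ i ∈ S, ℓ i = ∑ i ∈ S, a i := by
        refine Finset.sum_congr rfl (fun i hi => ?_)
        have h1 : a i ≤ ∑ j ∈ S, a j := Finset.single_le_sum (fun j _ => Nat.zero_le _) hi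
        have h2 : a i = min (ℓ i) (R + 1) := ha' i
        omega
      omega
    · intro h
      have hsubF : S ⊆ F := by
        intro i hi
        have h1 : ℓ i ≤ ∑ j ∈ S, ℓ j := Finset.single_le_sum (fun j _ => Nat.zero_le _) hi
        exact Finset.mem_filter.mpr ⟨hS hi, by omega⟩
      have h2 : ∑ i ∈ S, ℓ i ≤ T := Finset.sum_le_sum_of_subset hsubF
      have heq : ∑ i ∈ S, a i = ∑ i ∈ S, ℓ i :=
        Finset.sum_congr rfl (fun i hi => haF i (hsubF hi))
      omega
  set LN := SA - (2 * R + 1) with hLN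
  have hLN' : LN + (2 * R + 1) = SA := by omega
  set ℓs : ℕ → ℕ := Function.update a n LN with hℓs
  have hℓs_n : ℓs n = LN := Function.update_self n LN a
  have hℓs_ne : ∀ i, i ≠ n → ℓs i = a i := fun i hi => Function.update_of_ne hi LN a
  have hsumA_ℓs : ∑ i ∈ A, ℓs i = SA := by
    refine Finset.sum_congr rfl (fun i hi => hℓs_ne i ?_)
    have := Finset.mem_Icc.mp (by simpa [hA] using hi); omega
  refine ⟨ℓs, ?_, ?_, ?_, ?_, ?_⟩
  · intro i hi
    have hi' := Finset.mem_Icc.mp hi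
    by_cases h : i = n
    · rw [h, hℓs_n]; omega
    · rw [hℓs_ne i h]
      have h1 : 0 < ℓ i := hpos i hi
      rw [ha' i]; omega
  · intro i j h1 h2 h3
    by_cases hj : j = n
    · 
      by_cases hi : i = n
      · rw [hi, hj]
      · rw [hj, hℓs_ne i hi, hℓs_n]
        have h4 : ℓ i ≤ ℓ (n - 1) := hmono i (n - 1) h1 (by omega) (by omega)
        have h5 : a i = min (ℓ i) (R + 1) := ha' i
        have h6 : a (n - 1) = min (ℓ (n - 1)) (R + 1) := ha' (n - 1)
        omega
    · have hi : i ≠ n := by omega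
      rw [hℓs_ne i hi, hℓs_ne j hj, ha' i, ha' j]
      have h4 : ℓ i ≤ ℓ j := hmono i j h1 h2 h3
      omega
  · have hs : ∑ i ∈ Finset.Icc 1 n, ℓs i = ℓs n + ∑ i ∈ A, ℓs i := by
      rw [hsplitn, Finset.sum_insert hnA]
    rw [hs, hsumA_ℓs, hℓs_n]
    exact ⟨LN + R, by omega⟩
  · have hs2 : ∑ i ∈ Finset.Icc 1 (n - 2), ℓs i = ∑ i ∈ A2, a i := by
      rw [← hA2]
      refine Finset.sum_congr rfl (fun i hi => ?_)
      have hi' := Finset.mem_Icc.mp (by simpa [hA2] using hi)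
      rw [hℓs_ne i (by omega)]
    rw [hs2, hℓs_n, hℓs_ne (n - 1) (by omega)]
    omega
  · intro S hS
    have hnS : n ∉ S := fun h => hnA (hS h)
    have hsd : Finset.Icc 1 n \ insert n S = A \ S := by
      ext i
      simp only [Finset.mem_sdiff, Finset.mem_insert, Finset.mem_Icc, hA]
      constructor
      · rintro ⟨h1, h2⟩
        push_neg at h2
        exact ⟨⟨h1.1, by omega⟩, h2.2⟩
      · rintro ⟨h1, h2⟩
        exact ⟨⟨h1.1, by omega⟩, by push_neg; exact ⟨by omega, h2⟩⟩
    have hpart : ∑ i ∈ A \ S, ℓ i + ∑ i ∈ S, ℓ i = SL := Finset.sum_sdiff hS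
    have hparta : ∑ i ∈ A \ S, ℓs i + ∑ i ∈ S, ℓs i = ∑ i ∈ A, ℓs i := Finset.sum_sdiff hS
    have hSa : ∑ i ∈ S, ℓs i = ∑ i ∈ S, a i := by
      refine Finset.sum_congr rfl (fun i hi => hℓs_ne i (fun h => hnS (h ▸ hi)))
    have e2 : IsShort n ℓ (insert n S) ↔ ∑ i ∈ S, ℓ i ≤ r := by
      unfold IsShort
      rw [hsd, Finset.sum_insert hnS]
      omega
    have e1 : IsShort n ℓs (insert n S) ↔ ∑ i ∈ S, a i ≤ R := by
      unfold IsShort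
      rw [hsd, Finset.sum_insert hnS, hℓs_n]
      rw [hsumA_ℓs] at hparta
      omega
    rw [e1, e2]
    exact hiff S hS
end

section
/- Let n ≥ 4 and let ℓ = (ℓ_1,…,ℓ_n) be a nondecreasing vector of positive integers with ℓ_{n−2} < ℓ_{n−1} and ℓ_n + ℓ_{n−1} ≥ ℓ_1 + ⋯ + ℓ_{n−2} + 3. Let ℓ″ be the vector that agrees with ℓ except that ℓ″_{n−1} = ℓ_{n−1} − 1 and ℓ″_n = ℓ_n − 1. Then ℓ″ is a nondecreasing vector of positive integers, and for every S ⊆ {1,…,n−1}, the set S ∪ {n} is short for ℓ″ if and only if S ∪ {n} is short for ℓ. -/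
/-- Reduction move (a): if `ℓ_{n-2} < ℓ_{n-1}` and `ℓ_n + ℓ_{n-1} ≥ ℓ_1 + ⋯ + ℓ_{n-2} + 3`,
then decreasing `ℓ_{n-1}` and `ℓ_n` each by 1 yields a nondecreasing positive vector with
the same short subsets containing `n`. -/
theorem stmt_17 (n : ℕ) (hn : 4 ≤ n) (ℓ : ℕ → ℕ)
    (hpos : ∀ i ∈ Finset.Icc 1 n, 0 < ℓ i)
    (hmono : ∀ i j, 1 ≤ i → i ≤ j → j ≤ n → ℓ i ≤ ℓ j)
    (hlt : ℓ (n - 2) < ℓ (n - 1))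
    (hbig : (∑ i ∈ Finset.Icc 1 (n - 2), ℓ i) + 3 ≤ ℓ n + ℓ (n - 1))
    (ℓ'' : ℕ → ℕ)
    (hdef : ℓ'' = fun i => if i = n - 1 ∨ i = n then ℓ i - 1 else ℓ i) :
    (∀ i ∈ Finset.Icc 1 n, 0 < ℓ'' i) ∧
    (∀ i j, 1 ≤ i → i ≤ j → j ≤ n → ℓ'' i ≤ ℓ'' j) ∧
    ∀ S ⊆ Finset.Icc 1 (n - 1),
      (IsShort n ℓ'' (insert n S) ↔ IsShort n ℓ (insert n S)) := by
  have hne : n - 1 ≠ n := by omega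
  have h2 : 2 ≤ ℓ (n - 1) := by
    have := hpos (n - 2) (by simp; omega)
    omega
  have h2n : 2 ≤ ℓ n := le_trans h2 (hmono (n - 1) n (by omega) (by omega) le_rfl)
  have hval : ∀ i, ℓ'' i = if i = n - 1 ∨ i = n then ℓ i - 1 else ℓ i := by
    intro i; rw [hdef]
  refine ⟨?_, ?_, ?_⟩
  · intro i hi
    rw [hval]
    by_cases h : i = n - 1 ∨ i = n
    · rw [if_pos h]
      rcases h with h | h <;> subst h <;> omega
    · rw [if_neg h]; exact hpos i hi
  · intro i j hi hij hjn
    rw [hval, hval]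
    by_cases hj : j = n - 1 ∨ j = n
    · by_cases hi' : i = n - 1 ∨ i = n
      · rw [if_pos hi', if_pos hj]
        exact Nat.sub_le_sub_right (hmono i j hi hij hjn) 1
      · rw [if_neg hi', if_pos hj]
        have hi2 : i ≤ n - 2 := by omega
        have h1 : ℓ i ≤ ℓ (n - 2) := hmono i (n - 2) hi hi2 (by omega)
        have hj' : ℓ (n - 1) ≤ ℓ j := by
          rcases hj with h | h
          · rw [h]
          · rw [h]; exact hmono (n - 1) n (by omega) (by omega) le_rfl
        omega
    · have hi' : ¬(i = n - 1 ∨ i = n) := by omega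
      rw [if_neg hi', if_neg hj]; exact hmono i j hi hij hjn
  · intro S hS
    have hnS : n ∉ S := by
      intro h; have := hS h; simp at this; omega
    have key : ∀ A : Finset ℕ,
        (∑ i ∈ A, ℓ'' i) + (A.filter (fun i => i = n - 1 ∨ i = n)).card
          = ∑ i ∈ A, ℓ i := by
      intro A
      rw [Finset.card_filter, ← Finset.sum_add_distrib]
      apply Finset.sum_congr rfl
      intro i _
      rw [hval]
      by_cases h : i = n - 1 ∨ i = n
      · rw [if_pos h, if_pos h]
        rcases h with h | h <;> subst h <;> omega
      · rw [if_neg h, if_neg h]; omega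
    set T := insert n S with hT
    set C := Finset.Icc 1 n \ T with hC
    have keyT := key T
    have keyC := key C
    have hnT : n ∈ T := Finset.mem_insert_self n S
    unfold IsShort
    rw [← hC]
    by_cases hmem : n - 1 ∈ S
    · -- both n-1 and n in T; neither short
      have hfT : T.filter (fun i => i = n - 1 ∨ i = n) = {n - 1, n} := by
        ext i
        simp only [Finset.mem_filter, Finset.mem_insert, Finset.mem_singleton, hT]
        constructor
        · rintro ⟨_, h⟩; exact h
        · rintro (h | h)
          · exact ⟨Or.inr (h ▸ hmem), Or.inl h⟩
          · exact ⟨Or.inl h, Or.inr h⟩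
      have hfC : C.filter (fun i => i = n - 1 ∨ i = n) = ∅ := by
        ext i
        simp only [Finset.mem_filter, Finset.notMem_empty, iff_false, hC,
          Finset.mem_sdiff, hT, Finset.mem_insert]
        rintro ⟨⟨_, hni⟩, (h | h)⟩
        · exact hni (Or.inr (h ▸ hmem))
        · exact hni (Or.inl h)
      rw [hfT] at keyT
      rw [hfC] at keyC
      rw [Finset.card_pair hne] at keyT
      simp only [Finset.card_empty, add_zero] at keyC
      have hTa : ℓ (n - 1) + ℓ n ≤ ∑ i ∈ T, ℓ i := by
        have hsub : ({n - 1, n} : Finset ℕ) ⊆ T := by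
          intro i hi
          simp only [Finset.mem_insert, Finset.mem_singleton] at hi
          rcases hi with h | h
          · subst h; exact Finset.mem_insert_of_mem hmem
          · subst h; exact hnT
        calc ℓ (n - 1) + ℓ n = ∑ i ∈ ({n - 1, n} : Finset ℕ), ℓ i := by
              rw [Finset.sum_pair hne]
          _ ≤ ∑ i ∈ T, ℓ i := Finset.sum_le_sum_of_subset hsub
      have hCb : ∑ i ∈ C, ℓ i ≤ ∑ i ∈ Finset.Icc 1 (n - 2), ℓ i := by
        apply Finset.sum_le_sum_of_subset
        intro i hi
        simp only [hC, Finset.mem_sdiff, Finset.mem_Icc, hT, Finset.mem_insert] at hi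
        have h1 : i ≠ n - 1 := by
          intro h; exact hi.2 (Or.inr (h ▸ hmem))
        have h2' : i ≠ n := fun h => hi.2 (Or.inl h)
        simp only [Finset.mem_Icc]
        omega
      constructor <;> intro h <;> omega
    · -- n-1 in complement
      have hn1T : n - 1 ∉ T := by
        simp only [hT, Finset.mem_insert]
        push_neg
        exact ⟨hne, hmem⟩
      have hfT : T.filter (fun i => i = n - 1 ∨ i = n) = {n} := by
        ext i
        simp only [Finset.mem_filter, Finset.mem_singleton]
        constructor
        · rintro ⟨hiT, h | h⟩
          · exact absurd (h ▸ hiT) hn1T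
          · exact h
        · rintro h; exact ⟨h ▸ hnT, Or.inr h⟩
      have hfC : C.filter (fun i => i = n - 1 ∨ i = n) = {n - 1} := by
        ext i
        simp only [Finset.mem_filter, Finset.mem_singleton, hC, Finset.mem_sdiff]
        constructor
        · rintro ⟨⟨_, hni⟩, h | h⟩
          · exact h
          · exact absurd (h ▸ hnT) hni
        · rintro h
          subst h
          refine ⟨⟨by simp; omega, hn1T⟩, Or.inl rfl⟩
      rw [hfT] at keyT
      rw [hfC] at keyC
      simp only [Finset.card_singleton] at keyT keyC
      constructor <;> intro h <;> omega
end

section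
/- Let n ≥ 4 and 2 ≤ t ≤ n − 2, and let ℓ = (ℓ_1,…,ℓ_n) be a nondecreasing vector of positive integers with ℓ_{n−t−1} < ℓ_{n−t} = ⋯ = ℓ_{n−1} < ℓ_n and ℓ_n + ℓ_{n−1} ≥ ℓ_1 + ⋯ + ℓ_{n−2} + 3. Then ℓ_n − ℓ_{n−1} ≥ t − 1, and the vector ℓ″ obtained from ℓ by decreasing each of ℓ_{n−t},…,ℓ_{n−1} by 1 and decreasing ℓ_n by t is a nondecreasing vector of positive integers such that, for every S ⊆ {1,…,n−1}, the set S ∪ {n} is short for ℓ″ if and only if S ∪ {n} is short for ℓ. -/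
/-- Reduction move (b): if `ℓ_{n-t-1} < ℓ_{n-t} = ⋯ = ℓ_{n-1} < ℓ_n` (with `2 ≤ t ≤ n-2`)
and `ℓ_n + ℓ_{n-1} ≥ ℓ_1 + ⋯ + ℓ_{n-2} + 3`, then `ℓ_n - ℓ_{n-1} ≥ t - 1`, and decreasing
`ℓ_{n-t},…,ℓ_{n-1}` each by 1 and `ℓ_n` by `t` yields a nondecreasing positive vector
with the same short subsets containing `n`. -/
theorem stmt_18 (n t : ℕ) (hn : 4 ≤ n) (ht2 : 2 ≤ t) (htn : t ≤ n - 2) (ℓ : ℕ → ℕ)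
    (hpos : ∀ i ∈ Finset.Icc 1 n, 0 < ℓ i)
    (hmono : ∀ i j, 1 ≤ i → i ≤ j → j ≤ n → ℓ i ≤ ℓ j)
    (hlt1 : ℓ (n - t - 1) < ℓ (n - t))
    (heq : ∀ i, n - t ≤ i → i ≤ n - 1 → ℓ i = ℓ (n - 1))
    (hlt2 : ℓ (n - 1) < ℓ n)
    (hbig : (∑ i ∈ Finset.Icc 1 (n - 2), ℓ i) + 3 ≤ ℓ n + ℓ (n - 1))
    (ℓ'' : ℕ → ℕ)
    (hdef : ℓ'' = fun i =>
      if i = n then ℓ n - t else if n - t ≤ i ∧ i ≤ n - 1 then ℓ i - 1 else ℓ i) :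
    ℓ (n - 1) + (t - 1) ≤ ℓ n ∧
    (∀ i ∈ Finset.Icc 1 n, 0 < ℓ'' i) ∧
    (∀ i j, 1 ≤ i → i ≤ j → j ≤ n → ℓ'' i ≤ ℓ'' j) ∧
    ∀ S ⊆ Finset.Icc 1 (n - 1),
      (IsShort n ℓ'' (insert n S) ↔ IsShort n ℓ (insert n S)) := by
  -- basic index facts
  have hnt2 : 2 ≤ n - t := by omega
  -- ℓ (n-1) ≥ 2
  have hM2 : 2 ≤ ℓ (n - 1) := by
    have h1 := hpos (n - t - 1) (Finset.mem_Icc.mpr (by omega))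
    have h2 : ℓ (n - t) = ℓ (n - 1) := heq (n - t) le_rfl (by omega)
    omega
  -- decomposition of the sum over Icc 1 (n-2)
  have hIoc1 : ∀ m : ℕ, Finset.Icc 1 m = Finset.Ioc 0 m := by
    intro m; ext x; simp [Finset.mem_Icc, Finset.mem_Ioc]; omega
  have hIoc2 : Finset.Ioc (n - t - 1) (n - 2) = Finset.Icc (n - t) (n - 2) := by
    ext x; simp [Finset.mem_Icc, Finset.mem_Ioc]; omega
  have hconst : ∀ (a : ℕ), n - t ≤ a → ∀ (X : Finset ℕ), X ⊆ Finset.Icc a (n - 1) →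
      ∑ i ∈ X, ℓ i = X.card * ℓ (n - 1) := by
    intro a ha X hX
    calc ∑ i ∈ X, ℓ i = ∑ _i ∈ X, ℓ (n - 1) := by
          refine Finset.sum_congr rfl (fun i hi => ?_)
          have hb := Finset.mem_Icc.mp (hX hi)
          exact heq i (by omega) hb.2
      _ = X.card * ℓ (n - 1) := by rw [Finset.sum_const, smul_eq_mul]
  have hmidcard : (Finset.Icc (n - t) (n - 2)).card = t - 1 := by
    rw [Nat.card_Icc]; omega
  have hmid : ∑ i ∈ Finset.Icc (n - t) (n - 2), ℓ i = (t - 1) * ℓ (n - 1) := by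
    rw [hconst (n - t) le_rfl _ (Finset.Icc_subset_Icc_right (by omega)), hmidcard]
  have hdec : ∑ i ∈ Finset.Icc 1 (n - 2), ℓ i
      = ∑ i ∈ Finset.Icc 1 (n - t - 1), ℓ i + (t - 1) * ℓ (n - 1) := by
    rw [hIoc1 (n - 2), hIoc1 (n - t - 1), ← hmid, ← hIoc2]
    exact (Finset.sum_Ioc_consecutive ℓ (by omega) (by omega)).symm
  have hlow : n - t - 1 ≤ ∑ i ∈ Finset.Icc 1 (n - t - 1), ℓ i := by
    have h1 : (Finset.Icc 1 (n - t - 1)).card • 1 ≤ ∑ i ∈ Finset.Icc 1 (n - t - 1), ℓ i :=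
      Finset.card_nsmul_le_sum _ _ _ (fun i hi => by
        have := Finset.mem_Icc.mp hi
        exact hpos i (Finset.mem_Icc.mpr (by omega)))
    rw [smul_eq_mul, mul_one, Nat.card_Icc] at h1
    omega
  -- Part 1
  have hr : t = 2 ∨ 2 * ℓ (n - 1) + 2 * t ≤ (t - 1) * ℓ (n - 1) + 6 := by
    rcases Nat.lt_or_ge t 3 with h | h
    · left; omega
    · right
      obtain ⟨t', rfl⟩ : ∃ t', t = t' + 3 := ⟨t - 3, by omega⟩
      have hexp : (t' + 3 - 1) * ℓ (n - 1) = t' * ℓ (n - 1) + 2 * ℓ (n - 1) := by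
        have : t' + 3 - 1 = t' + 2 := by omega
        rw [this]; ring
      have h2 : t' * 2 ≤ t' * ℓ (n - 1) := Nat.mul_le_mul_left t' hM2
      linarith
  have part1 : ℓ (n - 1) + (t - 1) ≤ ℓ n := by
    rcases hr with h | h
    · omega
    · generalize hg : (t - 1) * ℓ (n - 1) = r at hdec h
      omega
  refine ⟨part1, ?_, ?_, ?_⟩
  -- Part 2: positivity
  · intro i hi
    have hb := Finset.mem_Icc.mp hi
    have hwin : n - t ≤ i → i ≤ n - 1 → ℓ i = ℓ (n - 1) := fun h1 h2 => heq i h1 h2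
    simp only [hdef]
    split_ifs with h1 h2
    · omega
    · have := hwin h2.1 h2.2; omega
    · exact hpos i hi
  -- Part 3: monotone
  · intro i j h1i hij hjn
    simp only [hdef]
    have heqnt : ℓ (n - t) = ℓ (n - 1) := heq (n - t) le_rfl (by omega)
    have hwi : (i < n - t ∨ n - 1 < i) ∨ ℓ i = ℓ (n - 1) := by
      by_cases h : n - t ≤ i ∧ i ≤ n - 1
      · exact Or.inr (heq i h.1 h.2)
      · exact Or.inl (by omega)
    have hwj : (j < n - t ∨ n - 1 < j) ∨ ℓ j = ℓ (n - 1) := by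
      by_cases h : n - t ≤ j ∧ j ≤ n - 1
      · exact Or.inr (heq j h.1 h.2)
      · exact Or.inl (by omega)
    have hsmi : n - t - 1 < i ∨ ℓ i ≤ ℓ (n - t - 1) := by
      by_cases h : i ≤ n - t - 1
      · exact Or.inr (hmono i (n - t - 1) h1i h (by omega))
      · exact Or.inl (by omega)
    have hmm : ℓ i ≤ ℓ j := hmono i j h1i hij hjn
    split_ifs <;> omega
  -- Part 4
  · intro S hS
    set W : Finset ℕ := Finset.Icc (n - t) (n - 1) with hW
    have hWsub : W ⊆ Finset.Icc 1 (n - 1) := Finset.Icc_subset_Icc_left (by omega)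
    have hWcard : W.card = t := by rw [hW, Nat.card_Icc]; omega
    have hnS : n ∉ S := fun h => by
      have := Finset.mem_Icc.mp (hS h); omega
    -- key sum lemma
    have key : ∀ A : Finset ℕ, A ⊆ Finset.Icc 1 (n - 1) →
        ∑ i ∈ A, ℓ'' i + (A ∩ W).card = ∑ i ∈ A, ℓ i := by
      intro A hA
      rw [← Finset.filter_mem_eq_inter, Finset.card_filter, ← Finset.sum_add_distrib]
      refine Finset.sum_congr rfl (fun i hi => ?_)
      have hb := Finset.mem_Icc.mp (hA hi)
      have hin : i ≠ n := by omega
      simp only [hdef, hW, Finset.mem_Icc, if_neg hin]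
      split_ifs with hw
      · have := heq i hw.1 hw.2; omega
      · omega
    have hC : Finset.Icc 1 n \ insert n S = Finset.Icc 1 (n - 1) \ S := by
      ext x
      simp only [Finset.mem_sdiff, Finset.mem_Icc, Finset.mem_insert, not_or]
      constructor
      · rintro ⟨⟨u1, u2⟩, u3, u4⟩; exact ⟨⟨u1, by omega⟩, u4⟩
      · rintro ⟨⟨u1, u2⟩, u4⟩; exact ⟨⟨u1, by omega⟩, by omega, u4⟩
    set C : Finset ℕ := Finset.Icc 1 (n - 1) \ S with hCdef
    have hCsub : C ⊆ Finset.Icc 1 (n - 1) := Finset.sdiff_subset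
    obtain ⟨k, hk⟩ : ∃ k, (S ∩ W).card = k := ⟨_, rfl⟩
    -- card of C ∩ W
    have hCW : C ∩ W = W \ S := by
      ext x
      simp only [hCdef, Finset.mem_inter, Finset.mem_sdiff]
      constructor
      · rintro ⟨⟨_, u2⟩, u3⟩; exact ⟨u3, u2⟩
      · rintro ⟨u1, u2⟩; exact ⟨⟨hWsub u1, u2⟩, u1⟩
    have hCWcard : (C ∩ W).card = t - k := by
      have h1 : (W ∩ S).card + (W \ S).card = W.card := Finset.card_inter_add_card_sdiff W S
      rw [hCW]
      rw [Finset.inter_comm] at h1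
      omega
    have hkt : k ≤ t := by
      have := Finset.card_le_card (Finset.inter_subset_right (s₁ := S) (s₂ := W))
      omega
    -- sum bounds
    have hSWsum : ∑ i ∈ S ∩ W, ℓ i = k * ℓ (n - 1) := by
      rw [← hk]; exact hconst (n - t) le_rfl _ (Finset.inter_subset_right)
    have hCWsum : ∑ i ∈ C ∩ W, ℓ i = (t - k) * ℓ (n - 1) := by
      rw [hconst (n - t) le_rfl _ (Finset.inter_subset_right), hCWcard]
    have hp : k * ℓ (n - 1) ≤ ∑ i ∈ S, ℓ i := by
      rw [← hSWsum]
      exact Finset.sum_le_sum_of_subset Finset.inter_subset_left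
    have hq : (t - k) * ℓ (n - 1) ≤ ∑ i ∈ C, ℓ i := by
      rw [← hCWsum]
      exact Finset.sum_le_sum_of_subset Finset.inter_subset_left
    have hqk : t - k ≤ (t - k) * ℓ (n - 1) := Nat.le_mul_of_pos_right _ (by omega)
    have hdk : k = 0 ∨ ℓ (n - 1) + 2 * k ≤ k * ℓ (n - 1) + 2 := by
      rcases Nat.eq_zero_or_pos k with h | h
      · exact Or.inl h
      · right
        obtain ⟨k', hk'⟩ : ∃ k', k = k' + 1 := ⟨k - 1, by omega⟩
        rw [hk']
        have hexp : (k' + 1) * ℓ (n - 1) = k' * ℓ (n - 1) + ℓ (n - 1) := by ring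
        have h2 : k' * 2 ≤ k' * ℓ (n - 1) := Nat.mul_le_mul_left k' hM2
        linarith
    -- total sum over Icc 1 (n-1)
    have htot : ∑ i ∈ C, ℓ i + ∑ i ∈ S, ℓ i = ∑ i ∈ Finset.Icc 1 (n - 1), ℓ i :=
      Finset.sum_sdiff hS
    have htop : ∑ i ∈ Finset.Icc 1 (n - 1), ℓ i
        = ∑ i ∈ Finset.Icc 1 (n - 2), ℓ i + ℓ (n - 1) := by
      have h1 : n - 1 = (n - 2) + 1 := by omega
      rw [h1, Finset.sum_Icc_succ_top (by omega), ← h1]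
    -- sums of ℓ''
    have hSsum := key S hS
    rw [hk] at hSsum
    have hCsum := key C hCsub
    rw [hCWcard] at hCsum
    have hln : ℓ'' n = ℓ n - t := by simp [hdef]
    -- unfold IsShort
    unfold IsShort
    rw [Finset.sum_insert hnS, Finset.sum_insert hnS, hC]
    rw [hln]
    -- pure arithmetic
    have hbig' : ∑ i ∈ Finset.Icc 1 (n - 2), ℓ i + 3 ≤ ℓ n + ℓ (n - 1) := hbig
    generalize hgp : k * ℓ (n - 1) = p at hp hdk
    generalize hgq : (t - k) * ℓ (n - 1) = q at hq hqk
    omega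
end
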